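/- arXiv:1505.06727 — 9 statements merged into one kernel-verified Lean document; each statement's English description precedes it below -/
import Mathlib

section
/- There exists an almost disjoint family (A_{n,α}) indexed by n ∈ ω and α ∈ 𝔠 (the continuum) of infinite subsets of ω such that for every family (A'_{n,α}) where each A'_{n,α} is a cofinite subset of A_{n,α}, we have sup_{p ∈ ω} |{n ∈ ω : p ∈ ⋃_{α ∈ 𝔠} A'_{n,α}}| = +∞. -/
/-!
Index the family by the sequences `x : ℕ → ℕ` all of whose fibres are infinite (there are `𝔠` of
them) and code finite sequences by natural numbers. Put into `A_{n,x}` the codes of those initial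
segments `x↾m` of `x` that are followed by `x m = n`. Two distinct branches share only the
initial segments below their first difference, which gives almost disjointness.

If fewer than `k` indices `n` met each point, then every finite sequence `s` would have a colour
`c s < k` such that `s` lies in no `A'_{c s, α}`. The branch `x` that follows the colouring at even
positions (and runs through every value infinitely often at odd ones) takes some colour `i`
infinitely often at even positions; all those initial segments lie in `A_{i,x} \ A'_{i,x}`,
which is therefore infinite.
-/

open Cardinal Encodable PiNat Set

namespace AlmostDisjointBranches

section Branches

variable {α : Type*} [Encodable α]

def branchSet (x : ℕ → α) (a : α) : Set ℕ := (fun m => encode (res x m)) '' (x ⁻¹' {a})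

theorem encode_res_injective (x : ℕ → α) : Function.Injective fun m => encode (res x m) :=
  fun m m' h => by simpa using congrArg List.length (encode_injective h)

theorem branchSet_infinite {x : ℕ → α} {a : α} (h : (x ⁻¹' {a}).Infinite) :
    (branchSet x a).Infinite :=
  h.image (encode_res_injective x).injOn

theorem disjoint_branchSet (x : ℕ → α) {a b : α} (h : a ≠ b) :
    Disjoint (branchSet x a) (branchSet x b) := by
  rw [Set.disjoint_iff]
  rintro _ ⟨⟨m, rfl, rfl⟩, ⟨m', hm', hmm'⟩⟩
  exact h (encode_res_injective x hmm' ▸ hm')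

theorem branchSet_inter_finite {x y : ℕ → α} (h : x ≠ y) (a b : α) :
    (branchSet x a ∩ branchSet y b).Finite := by
  refine ((finite_Iic (firstDiff x y)).image fun m => encode (res x m)).subset ?_
  rintro _ ⟨⟨m, -, rfl⟩, ⟨m', -, hmm'⟩⟩
  have hres : res y m' = res x m := encode_injective hmm'
  obtain rfl : m = m' := by simpa using (congrArg List.length hres).symm
  refine ⟨m, mem_Iic.mpr (not_lt.mp fun hlt => apply_firstDiff_ne h ?_), rfl⟩
  exact (res_eq_res.mp hres hlt).symm

end Branches

theorem exists_eq_apply_res {α : Type*} (F : List α → α) :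
    ∃ x : ℕ → α, ∀ m, x m = F (res x m) := by
  let L : ℕ → List α := fun m => Nat.rec [] (fun _ l => F l :: l) m
  have hres : ∀ m, res (fun m => F (L m)) m = L m := by
    intro m
    induction m with
    | zero => rfl
    | succ m ih => simp only [res_succ, ih]; rfl
  exact ⟨fun m => F (L m), fun m => by rw [hres]⟩

def infiniteFibers : Set (ℕ → ℕ) := {x | ∀ n, (x ⁻¹' {n}).Infinite}

theorem mem_infiniteFibers_of_apply_odd {x : ℕ → ℕ} (hx : ∀ t, x (2 * t + 1) = t.unpair.1) :
    x ∈ infiniteFibers := by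
  intro n
  refine infinite_of_injective_forall_mem (f := fun j => 2 * Nat.pair n j + 1) ?_ ?_
  · intro j j' h
    exact (Nat.pair_eq_pair.mp (by simpa using h : Nat.pair n j = Nat.pair n j')).2
  · intro j
    simp [hx]

def weave (y : ℕ → ℕ) (m : ℕ) : ℕ := if m % 2 = 0 then y (m / 2) else (m / 2).unpair.1

theorem weave_injective : Function.Injective weave := by
  intro y y' h
  funext t
  simpa [weave] using congrFun h (2 * t)

theorem weave_mem_infiniteFibers (y : ℕ → ℕ) : weave y ∈ infiniteFibers :=
  mem_infiniteFibers_of_apply_odd fun t => by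
    rw [weave, if_neg (by omega), show (2 * t + 1) / 2 = t by omega]

theorem mk_infiniteFibers : #infiniteFibers = 𝔠 := by
  have hfun : #(ℕ → ℕ) = 𝔠 := by
    rw [← power_def, mk_nat, aleph0_power_aleph0]
  refine le_antisymm (hfun ▸ mk_subtype_le _) (hfun ▸ ?_)
  exact mk_le_of_injective (f := fun y => ⟨weave y, weave_mem_infiniteFibers y⟩)
    fun y y' h => weave_injective (congrArg Subtype.val h)

theorem exists_lt_notMem_of_encard_lt {s : Set ℕ} {k : ℕ} (h : s.encard < k) :
    ∃ i < k, i ∉ s := by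
  by_contra! hs
  exact (Set.Nat.encard_range k ▸ encard_le_encard fun i hi => hs i hi).not_gt h

theorem exists_infinite_fiber_of_bounded {v : ℕ → ℕ} {k : ℕ} (hv : ∀ t, v t < k) :
    ∃ i, (v ⁻¹' {i}).Infinite := by
  obtain ⟨i, hi⟩ := Finite.exists_infinite_fiber fun t => (⟨v t, hv t⟩ : Fin k)
  refine ⟨i, infinite_coe_iff.mp ?_⟩
  convert hi using 3
  ext t
  simp [Fin.ext_iff]

theorem exists_le_encard {ι : Type*} (g : ι → ℕ → ℕ) (hg : infiniteFibers ⊆ range g)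
    (A' : ℕ → ι → Set ℕ) (hA' : ∀ n α, (branchSet (g α) n \ A' n α).Finite) (k : ℕ) :
    ∃ p, (k : ℕ∞) ≤ {n | p ∈ ⋃ α, A' n α}.encard := by
  by_contra! hlt
  have hcolour : ∀ s : List ℕ, ∃ i < k, ∀ α, encode s ∉ A' i α := fun s => by
    simpa using exists_lt_notMem_of_encard_lt (hlt (encode s))
  choose c hck hc using hcolour
  obtain ⟨x, hx⟩ := exists_eq_apply_res fun s =>
    if s.length % 2 = 0 then c s else (s.length / 2).unpair.1
  have hx_even : ∀ t, x (2 * t) = c (res x (2 * t)) := fun t => by simp [hx (2 * t)]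
  have hx_odd : ∀ t, x (2 * t + 1) = t.unpair.1 := fun t => by
    rw [hx, res_length, if_neg (by omega), show (2 * t + 1) / 2 = t by omega]
  obtain ⟨α, hα⟩ := hg (mem_infiniteFibers_of_apply_odd hx_odd)
  obtain ⟨i, hfibre⟩ := exists_infinite_fiber_of_bounded (v := fun t => x (2 * t))
    fun t => hx_even t ▸ hck _
  refine (hfibre.image ((encode_res_injective x).comp (mul_right_injective₀ two_ne_zero)).injOn)
    (hα ▸ hA' i α |>.subset ?_)
  rintro _ ⟨t, ht, rfl⟩
  refine ⟨⟨2 * t, ht, rfl⟩, ?_⟩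
  have hci : c (res x (2 * t)) = i := (hx_even t).symm.trans ht
  exact hci ▸ hc _ α

end AlmostDisjointBranches

open Cardinal AlmostDisjointBranches

/-- There exists an almost disjoint family `(A_{n,α})_{n ∈ ω, α ∈ 𝔠}` of
infinite subsets of `ω` such that for every family `(A'_{n,α})` with each `A'_{n,α}` a
cofinite subset of `A_{n,α}`, we have `sup_p |{n : p ∈ ⋃_α A'_{n,α}}| = +∞`. -/
theorem statement0 (ι : Type) (hι : #ι = Cardinal.continuum) :
    ∃ A : ℕ → ι → Set ℕ,
      (∀ n α, (A n α).Infinite) ∧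
      (∀ n α m β, (n, α) ≠ (m, β) → (A n α ∩ A m β).Finite) ∧
      ∀ A' : ℕ → ι → Set ℕ,
        (∀ n α, A' n α ⊆ A n α ∧ (A n α \ A' n α).Finite) →
        ∀ k : ℕ, ∃ p : ℕ, (k : ℕ∞) ≤ {n : ℕ | p ∈ ⋃ α : ι, A' n α}.encard := by
  obtain ⟨g⟩ : Nonempty (ι ≃ infiniteFibers) := Cardinal.eq.mp (by rw [hι, mk_infiniteFibers])
  have hg : Function.Injective fun α => (g α : ℕ → ℕ) := Subtype.val_injective.comp g.injective
  have hrange : infiniteFibers ⊆ range fun α => (g α : ℕ → ℕ) :=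
    fun x hx => ⟨g.symm ⟨x, hx⟩, by simp⟩
  refine ⟨fun n α => branchSet (g α : ℕ → ℕ) n, fun n α => branchSet_infinite ((g α).2 n), ?_,
    fun A' hA' => exists_le_encard _ hrange A' fun n α => (hA' n α).2⟩
  intro n α m β hne
  by_cases hαβ : α = β
  · subst hαβ
    have hnm : n ≠ m := fun h => hne (h ▸ rfl)
    simp [(disjoint_branchSet _ hnm).inter_eq]
  · exact branchSet_inter_finite (hg.ne hαβ) n m
end

section
/- Let K be a compact Hausdorff space and L a closed subspace of K. If L satisfies property (∗), then K satisfies property (∗). -/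
open Cardinal
open scoped Classical

/-- Auxiliary: a family of continuous `[0,1]`-valued functions that are `1` on the `F n`
and have pairwise disjoint supports. -/
theorem exists_sep_family (K : Type) [TopologicalSpace K] [CompactSpace K] [T2Space K]
    (F : ℕ → Set K) (hFc : ∀ n, IsClosed (F n))
    (hsep : ∀ n, F n ∩ closure (⋃ m ∈ {m : ℕ | m ≠ n}, F m) = ∅) :
    ∃ u : ℕ → C(K, ℝ), (∀ n, Set.EqOn (u n) 1 (F n)) ∧
      (∀ n x, u n x ∈ Set.Icc (0:ℝ) 1) ∧
      (∀ m n, m ≠ n → Disjoint (tsupport (u m)) (tsupport (u n))) := by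
  set B : ℕ → Set K := fun n => closure (⋃ m ∈ {m : ℕ | m ≠ n}, F m) with hB
  have hFB : ∀ n, F n ⊆ (B n)ᶜ := by
    intro n x hx hxB
    have : x ∈ F n ∩ B n := ⟨hx, hxB⟩
    rw [hsep n] at this
    exact this
  have hFB' : ∀ m n, m ≠ n → F m ⊆ B n := by
    intro m n hmn x hx
    exact subset_closure (Set.mem_biUnion (by exact hmn) hx)
  -- Urysohn functions
  have hv : ∀ n, ∃ v : C(K, ℝ), tsupport v ⊆ (B n)ᶜ ∧ Set.EqOn v 1 (F n) ∧
      ∀ x, v x ∈ Set.Icc (0:ℝ) 1 := by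
    intro n
    exact exists_tsupport_one_of_isOpen_isClosed isClosed_closure.isOpen_compl
      (isClosed_closure.isCompact) (hFc n) (hFB n)
  choose v hv1 hv2 hv3 using hv
  -- building blocks
  set w : ℕ → C(K, ℝ) := fun n => ⟨fun x => max (2 * v n x - 1) 0, by
    exact (((continuous_const.mul (v n).continuous).sub continuous_const).max continuous_const)⟩
    with hw
  set q : ℕ → C(K, ℝ) := fun n => ⟨fun x => max (1 - 3 * v n x) 0, by
    exact ((continuous_const.sub (continuous_const.mul (v n).continuous)).max continuous_const)⟩
    with hq
  refine ⟨fun n => ⟨fun x => w n x * ∏ m ∈ Finset.range n, q m x,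
    ((w n).continuous.mul (continuous_finset_prod _ fun m _ => (q m).continuous))⟩, ?_, ?_, ?_⟩
  · -- EqOn 1
    intro n x hx
    have hwx : w n x = 1 := by
      simp only [hw, ContinuousMap.coe_mk]
      rw [hv2 n hx]
      norm_num
    have hqx : ∀ m ∈ Finset.range n, q m x = 1 := by
      intro m hm
      have hmn : n ≠ m := by
        intro hh; rw [hh] at hm; exact absurd (Finset.mem_range.mp hm) (lt_irrefl m)
      have : x ∈ B m := hFB' n m hmn hx
      have hvz : v m x = 0 := by
        by_contra hne
        exact (hv1 m (subset_tsupport _ hne)) this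
      simp only [hq, ContinuousMap.coe_mk]
      rw [hvz]
      norm_num
    simp only [ContinuousMap.coe_mk, Pi.one_apply]
    rw [hwx, Finset.prod_congr rfl hqx]
    simp
  · -- Icc bounds
    intro n x
    have h0w : 0 ≤ w n x := le_max_right _ _
    have h1w : w n x ≤ 1 := by
      simp only [hw, ContinuousMap.coe_mk]
      have := (hv3 n x).2
      apply max_le <;> linarith
    have h0q : ∀ m, 0 ≤ q m x := fun m => le_max_right _ _
    have h1q : ∀ m, q m x ≤ 1 := by
      intro m
      simp only [hq, ContinuousMap.coe_mk]
      have := (hv3 m x).1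
      apply max_le <;> linarith
    constructor
    · exact mul_nonneg h0w (Finset.prod_nonneg fun m _ => h0q m)
    · simp only [ContinuousMap.coe_mk]
      calc w n x * ∏ m ∈ Finset.range n, q m x
          ≤ 1 * 1 := by
            apply mul_le_mul h1w (Finset.prod_le_one (fun m _ => h0q m) (fun m _ => h1q m))
              (Finset.prod_nonneg fun m _ => h0q m) zero_le_one
        _ = 1 := by ring
  · -- disjoint supports
    have key : ∀ m n, m < n → Disjoint
        (tsupport fun x => w m x * ∏ k ∈ Finset.range m, q k x)
        (tsupport fun x => w n x * ∏ k ∈ Finset.range n, q k x) := by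
      intro m n hmn
      have hm_sub : (tsupport fun x => w m x * ∏ k ∈ Finset.range m, q k x) ⊆
          {x | (1:ℝ)/2 ≤ v m x} := by
        apply closure_minimal
        · intro x hx
          have hwne : w m x ≠ 0 := fun hz => hx (by simp [hz])
          have : 0 < 2 * v m x - 1 := by
            rcases lt_or_ge 0 (2 * v m x - 1) with hpos | hle
            · exact hpos
            · exfalso
              apply hwne
              simp only [hw, ContinuousMap.coe_mk]
              exact max_eq_right hle
          simp only [Set.mem_setOf_eq]; linarith
        · exact isClosed_le continuous_const (v m).continuous
      have hn_sub : (tsupport fun x => w n x * ∏ k ∈ Finset.range n, q k x) ⊆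
          {x | v m x ≤ (1:ℝ)/3} := by
        apply closure_minimal
        · intro x hx
          have hprod : (∏ k ∈ Finset.range n, q k x) ≠ 0 := fun hz => hx (by simp [hz])
          have hqm : q m x ≠ 0 :=
            Finset.prod_ne_zero_iff.mp hprod m (Finset.mem_range.mpr hmn)
          have : 0 < 1 - 3 * v m x := by
            rcases lt_or_ge 0 (1 - 3 * v m x) with hpos | hle
            · exact hpos
            · exfalso
              apply hqm
              simp only [hq, ContinuousMap.coe_mk]
              exact max_eq_right hle
          simp only [Set.mem_setOf_eq]; linarith
        · exact isClosed_le (v m).continuous continuous_const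
      exact Set.disjoint_left.mpr fun x hxm hxn => by
        have h1 := hm_sub hxm
        have h2 := hn_sub hxn
        simp only [Set.mem_setOf_eq] at h1 h2
        linarith
    intro m n hmn
    rcases lt_or_gt_of_ne hmn with hlt | hgt
    · exact key m n hlt
    · exact (key n m hgt).symm

/-- Property (∗) of a compact Hausdorff space `K`: there exist a sequence `(F_n)` of
closed subsets of `K` and a bounded weak*-null biorthogonal system
`(f_{n,α}, γ_{n,α})_{n∈ω,α∈𝔠}` in `C(K)` with
`F_n ∩ closure(⋃_{m≠n} F_m) = ∅` and `supp f_{n,α} ⊆ F_n`. -/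
def PropertyStar (K : Type) [TopologicalSpace K] [CompactSpace K] [T2Space K] : Prop :=
  ∃ (ι : Type) (_ : #ι = Cardinal.continuum)
    (F : ℕ → Set K) (f : ℕ → ι → C(K, ℝ)) (γ : ℕ → ι → (C(K, ℝ) →L[ℝ] ℝ)),
    (∀ n, IsClosed (F n)) ∧
    (∀ n, F n ∩ closure (⋃ m ∈ {m : ℕ | m ≠ n}, F m) = ∅) ∧
    (∀ n α m β, γ n α (f m β) = if (n, α) = (m, β) then (1 : ℝ) else 0) ∧
    (∃ C : ℝ, ∀ n α, ‖f n α‖ ≤ C ∧ ‖γ n α‖ ≤ C) ∧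
    (∀ g : C(K, ℝ), ∀ ε : ℝ, 0 < ε → {p : ℕ × ι | ε ≤ |γ p.1 p.2 g|}.Finite) ∧
    (∀ n α, tsupport ⇑(f n α) ⊆ F n)

/-- if a closed subspace `L` of a compact Hausdorff space `K` satisfies
property (∗), then so does `K`. -/
theorem statement6 (K : Type) [TopologicalSpace K] [CompactSpace K] [T2Space K]
    (L : Set K) (hL : IsClosed L)
    (h : @PropertyStar ↥L _ (isCompact_iff_compactSpace.mp hL.isCompact) _) :
    PropertyStar K := by
  haveI : CompactSpace ↥L := isCompact_iff_compactSpace.mp hL.isCompact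
  obtain ⟨ι, hι, F, f, γ, hFc, hFsep, hbio, ⟨C, hC⟩, hwnull, hsupp⟩ := h
  -- the images of the F n in K
  set F' : ℕ → Set K := fun n => Subtype.val '' F n with hF'
  have hemb := hL.isClosedEmbedding_subtypeVal
  have hF'c : ∀ n, IsClosed (F' n) := fun n => hemb.isClosedMap _ (hFc n)
  have hF'sep : ∀ n, F' n ∩ closure (⋃ m ∈ {m : ℕ | m ≠ n}, F' m) = ∅ := by
    intro n
    have h1 : (⋃ m ∈ {m : ℕ | m ≠ n}, F' m) =
        Subtype.val '' (⋃ m ∈ {m : ℕ | m ≠ n}, F m) := by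
      rw [Set.image_iUnion₂]
    rw [h1, hemb.closure_image_eq, ← Set.image_inter Subtype.val_injective, hFsep n,
      Set.image_empty]
  -- separating functions
  obtain ⟨u, hu1, hu2, hu3⟩ := exists_sep_family K F' hF'c hF'sep
  -- extension of functions via Tietze + clamping
  have hext : ∀ n α, ∃ g : C(K, ℝ), g.restrict L = f n α :=
    fun n α => ContinuousMap.exists_restrict_eq hL (f n α)
  choose g hg using hext
  set b : ℕ → C(K, ℝ) := fun n => ⟨fun x => max (2 * u n x - 1) 0, by
    exact (((continuous_const.mul (u n).continuous).sub continuous_const).max continuous_const)⟩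
    with hb
  set g' : ℕ → ι → C(K, ℝ) := fun n α => ⟨fun x =>
      max (-‖f n α‖) (min (g n α x) ‖f n α‖), by
    exact continuous_const.max ((g n α).continuous.min continuous_const)⟩ with hg'
  set f' : ℕ → ι → C(K, ℝ) := fun n α => ⟨fun x => g' n α x * b n x,
    (g' n α).continuous.mul (b n).continuous⟩ with hf'
  -- restriction operator
  set R : C(K, ℝ) →L[ℝ] C(↥L, ℝ) := LinearMap.mkContinuous
    { toFun := fun φ => φ.restrict L
      map_add' := fun φ ψ => by ext x; simp
      map_smul' := fun c φ => by ext x; simp } 1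
    (fun φ => by
      rw [one_mul]
      refine (ContinuousMap.norm_le _ (norm_nonneg φ)).mpr fun x => ?_
      exact φ.norm_coe_le_norm x) with hR
  set γ' : ℕ → ι → (C(K, ℝ) →L[ℝ] ℝ) := fun n α => (γ n α).comp R with hγ'
  have hRapp : ∀ φ : C(K, ℝ), R φ = φ.restrict L := fun φ => rfl
  -- key: f' restricts back to f
  have hrest : ∀ n α, (f' n α).restrict L = f n α := by
    intro n α
    ext x
    have hgx : g n α ↑x = f n α x := by
      have := hg n α
      rw [ContinuousMap.ext_iff] at this
      exact this x
    simp only [ContinuousMap.restrict_apply, hf', ContinuousMap.coe_mk]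
    by_cases hx : (↑x : K) ∈ F' n
    · have hxF : x ∈ F n := by
        obtain ⟨y, hy, hyx⟩ := hx
        rwa [Subtype.val_injective hyx] at hy
      have hbx : b n ↑x = 1 := by
        simp only [hb, ContinuousMap.coe_mk]
        rw [hu1 n hx]
        norm_num
      have habs : |f n α x| ≤ ‖f n α‖ := by
        have := (f n α).norm_coe_le_norm x
        rwa [Real.norm_eq_abs] at this
      rw [abs_le] at habs
      have : g' n α ↑x = f n α x := by
        simp only [hg', ContinuousMap.coe_mk, hgx]
        rw [min_eq_left habs.2, max_eq_right habs.1]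
      rw [this, hbx, mul_one]
    · have hxF : x ∉ F n := fun hc => hx ⟨x, hc, rfl⟩
      have hfx : f n α x = 0 := by
        by_contra hne
        exact hxF (hsupp n α (subset_tsupport _ hne))
      have : g' n α ↑x = 0 := by
        simp only [hg', ContinuousMap.coe_mk, hgx, hfx]
        rw [min_eq_left (norm_nonneg _), max_eq_right (neg_nonpos_of_nonneg (norm_nonneg _))]
      rw [this, zero_mul, hfx]
  -- target sets
  refine ⟨ι, hι, fun n => (u n) ⁻¹' Set.Ici ((1:ℝ)/2), f', γ', ?_, ?_, ?_, ?_, ?_, ?_⟩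
  · exact fun n => isClosed_Ici.preimage (u n).continuous
  · -- separation
    intro n
    have hsub : (⋃ m ∈ {m : ℕ | m ≠ n}, (u m) ⁻¹' Set.Ici ((1:ℝ)/2)) ⊆
        {x | u n x ≤ 0} := by
      intro x hx
      obtain ⟨m, hm, hxm⟩ := Set.mem_iUnion₂.mp hx
      have hum : u m x ≠ 0 := by
        have : (1:ℝ)/2 ≤ u m x := hxm
        intro hz; rw [hz] at this; linarith
      have hxts : x ∈ tsupport (u m) := subset_tsupport _ hum
      have hxnot : x ∉ tsupport (u n) :=
        Set.disjoint_left.mp (hu3 m n (fun hc => hm (hc ▸ rfl))) hxts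
      have : u n x = 0 := image_eq_zero_of_notMem_tsupport hxnot
      simp [this]
    have hcl : closure (⋃ m ∈ {m : ℕ | m ≠ n}, (u m) ⁻¹' Set.Ici ((1:ℝ)/2)) ⊆
        {x | u n x ≤ 0} :=
      closure_minimal hsub (isClosed_le (u n).continuous continuous_const)
    ext x
    simp only [Set.mem_inter_iff, Set.mem_preimage, Set.mem_Ici, Set.mem_empty_iff_false,
      iff_false, not_and]
    intro h1 h2
    have := hcl h2
    simp only [Set.mem_setOf_eq] at this
    linarith
  · -- biorthogonality
    intro n α m β
    have : γ' n α (f' m β) = γ n α (f m β) := by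
      simp only [hγ', ContinuousLinearMap.comp_apply, hRapp, hrest]
    rw [this, hbio]
  · -- bounds
    have hα : Nonempty ι := by
      rw [← Cardinal.mk_ne_zero_iff, hι]
      exact Cardinal.continuum_ne_zero
    obtain ⟨α₀⟩ := hα
    have hC0 : 0 ≤ C := le_trans (norm_nonneg _) (hC 0 α₀).1
    refine ⟨C, fun n α => ⟨?_, ?_⟩⟩
    · refine (ContinuousMap.norm_le _ hC0).mpr fun x => ?_
      simp only [hf', ContinuousMap.coe_mk, Real.norm_eq_abs, abs_mul]
      have hb01 : 0 ≤ b n x ∧ b n x ≤ 1 := by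
        constructor
        · exact le_max_right _ _
        · simp only [hb, ContinuousMap.coe_mk]
          have := (hu2 n x).2
          apply max_le <;> linarith
      have hgb : |g' n α x| ≤ ‖f n α‖ := by
        simp only [hg', ContinuousMap.coe_mk]
        rw [abs_le]
        constructor
        · exact le_max_left _ _
        · exact max_le (by linarith [norm_nonneg (f n α)]) (min_le_right _ _)
      calc |g' n α x| * |b n x| ≤ ‖f n α‖ * 1 := by
            apply mul_le_mul hgb (by rw [abs_of_nonneg hb01.1]; exact hb01.2)
              (abs_nonneg _) (norm_nonneg _)
        _ = ‖f n α‖ := mul_one _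
        _ ≤ C := (hC n α).1
    · have hRnorm : ‖R‖ ≤ 1 := LinearMap.mkContinuous_norm_le _ zero_le_one _
      calc ‖γ' n α‖ ≤ ‖γ n α‖ * ‖R‖ := ContinuousLinearMap.opNorm_comp_le _ _
        _ ≤ C * 1 := mul_le_mul (hC n α).2 hRnorm (ContinuousLinearMap.opNorm_nonneg R) hC0
        _ = C := mul_one _
  · -- weak*-null
    intro φ ε hε
    have : {p : ℕ × ι | ε ≤ |γ' p.1 p.2 φ|} =
        {p : ℕ × ι | ε ≤ |γ p.1 p.2 (φ.restrict L)|} := by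
      ext p
      simp only [Set.mem_setOf_eq, hγ', ContinuousLinearMap.comp_apply, hRapp]
    rw [this]
    exact hwnull (φ.restrict L) ε hε
  · -- supports
    intro n α
    apply closure_minimal
    · intro x hx
      have hbx : b n x ≠ 0 := by
        intro hz
        apply hx
        simp [hf', hz]
      have : 0 < 2 * u n x - 1 := by
        rcases lt_or_ge 0 (2 * u n x - 1) with hpos | hle
        · exact hpos
        · exfalso
          apply hbx
          simp only [hb, ContinuousMap.coe_mk]
          exact max_eq_right hle
      simp only [Set.mem_preimage, Set.mem_Ici]
      linarith
    · exact isClosed_Ici.preimage (u n).continuous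
end

section
/- Let K be a compact Hausdorff space, (F_n)_{n∈ω} a sequence of pairwise disjoint closed subsets of K, and F a closed subset of K such that: (a) F admits an extension operator in K; (b) every cluster point of the sequence (F_n) lies in F and F_n ∩ F = ∅ for all n; (c) for each n there is a weak*-null biorthogonal system (f_{n,α}, γ_{n,α})_{α∈𝔠} in C(F_n) with sup_{n,α} ‖f_{n,α}‖ < ∞ and sup_{n,α} ‖γ_{n,α}‖ < ∞. Then K satisfies property (∗). -/
/-!
A continuous `ψ` with `ψ = 2⁻ⁿ` on `F_n` and `ψ = 0` on `F` is a uniformly convergent sum of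
Urysohn functions (the sets `F ∪ ⋃_{m ≠ n} F_m` are closed because cluster points lie in `F`).
The bands `G_n = ψ⁻¹[2⁻ⁿ - 2⁻ⁿ/10, 2⁻ⁿ + 2⁻ⁿ/10]` are closed neighbourhoods of `F_n` that avoid `F`
and are separated from the closure of the union of the others. Cut-offs supported in `G_n` turn
norm-preserving Tietze extensions of the `f_{n,α}` into functions on `K`, and `γ_{n,α}` is lifted
to `g ↦ γ_{n,α}((g - E (g|_F))|_{F_n})`. Biorthogonality survives because the new functions vanish
on `F`. Weak*-nullity holds because `g - E (g|_F)` vanishes on `F`: by compactness only finitely many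
`F_n` meet the set where it is `≥ δ`, so its norm on `F_n` tends to `0` along the cofinite filter.
-/

open Cardinal
open scoped Classical

/-- `x` is a cluster point of the sequence of sets `(S n)`: every neighborhood of `x`
meets `S n` for infinitely many `n`. -/
def IsClusterPointOfSets {K : Type} [TopologicalSpace K] (S : ℕ → Set K) (x : K) : Prop :=
  ∀ U ∈ nhds x, {n : ℕ | (S n ∩ U).Nonempty}.Infinite

open Set Filter Topology

section ClusterPoints

variable {K : Type} [TopologicalSpace K] {Fs : ℕ → Set K} {F : Set K}

theorem not_isClusterPointOfSets_iff {x : K} :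
    ¬ IsClusterPointOfSets Fs x ↔ ∃ U ∈ 𝓝 x, ∀ᶠ n in cofinite, Disjoint (Fs n) U := by
  simp [IsClusterPointOfSets, eventually_cofinite, not_disjoint_iff_nonempty_inter]

theorem isClosed_union_biUnion (hFsclosed : ∀ n, IsClosed (Fs n)) (hFclosed : IsClosed F)
    (hcluster : ∀ x, IsClusterPointOfSets Fs x → x ∈ F) (S : Set ℕ) :
    IsClosed (F ∪ ⋃ m ∈ S, Fs m) := by
  refine isClosed_iff_nhds.2 fun x hx => ?_
  by_contra hxs
  simp only [mem_union, mem_iUnion₂, not_or, not_exists] at hxs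
  obtain ⟨U, hU, hfin⟩ := not_isClusterPointOfSets_iff.1 (mt (hcluster x) hxs.1)
  set M := {m | m ∈ S ∧ ¬ Disjoint (Fs m) U}
  have hV : U ∩ Fᶜ ∩ ⋂ m ∈ M, (Fs m)ᶜ ∈ 𝓝 x := by
    refine inter_mem (inter_mem hU (hFclosed.isOpen_compl.mem_nhds hxs.1)) ?_
    refine (biInter_mem ((eventually_cofinite.1 hfin).subset fun m hm => hm.2)).2 fun m hm => ?_
    exact (hFsclosed m).isOpen_compl.mem_nhds (hxs.2 m hm.1)
  obtain ⟨y, ⟨⟨hyU, hyF⟩, hyM⟩, hy⟩ := hx _ hV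
  obtain ⟨m, hm, hym⟩ := mem_iUnion₂.1 (hy.resolve_left hyF)
  exact mem_iInter₂.1 hyM m ⟨hm, not_disjoint_iff.2 ⟨y, hym, hyU⟩⟩ hym

theorem eventually_cofinite_disjoint_of_isCompact
    (hcluster : ∀ x, IsClusterPointOfSets Fs x → x ∈ F) {A : Set K} (hA : IsCompact A)
    (hAF : Disjoint A F) : ∀ᶠ n in cofinite, Disjoint (Fs n) A := by
  refine hA.induction_on (p := fun A => ∀ᶠ n in cofinite, Disjoint (Fs n) A)
    (by simp) (fun _ _ hst ht => ht.mono fun _ h => h.mono_right hst)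
    (fun _ _ hs ht => (hs.and ht).mono fun _ h => disjoint_union_right.2 h) fun x hx => ?_
  obtain ⟨U, hU, hfin⟩ :=
    not_isClusterPointOfSets_iff.1 fun h => hAF.notMem_of_mem_left hx (hcluster x h)
  exact ⟨U, mem_nhdsWithin_of_mem_nhds hU, hfin⟩

theorem tendsto_norm_restrict_cofinite_zero [CompactSpace K] [∀ n, CompactSpace (Fs n)]
    (hcluster : ∀ x, IsClusterPointOfSets Fs x → x ∈ F) {h : C(K, ℝ)}
    (hh : ∀ x ∈ F, h x = 0) : Tendsto (fun n => ‖h.restrict (Fs n)‖) cofinite (𝓝 0) := by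
  refine tendsto_order.2 ⟨fun a ha => .of_forall fun n => ha.trans_le (norm_nonneg _),
    fun δ hδ => ?_⟩
  set A := {x | δ / 2 ≤ |h x|}
  have hAF : Disjoint A F := disjoint_left.2 fun x hxA hxF => by
    simp only [A, mem_ofPred_eq, hh x hxF, abs_zero] at hxA
    linarith
  have hA : IsCompact A := (isClosed_le continuous_const (continuous_abs.comp h.continuous)).isCompact
  filter_upwards [eventually_cofinite_disjoint_of_isCompact hcluster hA hAF] with n hn
  refine lt_of_le_of_lt ((ContinuousMap.norm_le _ (by positivity)).2 fun x => ?_) (half_lt_self hδ)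
  exact (not_le.1 fun hx => hn.notMem_of_mem_left x.2 hx).le

end ClusterPoints

section Separation

variable {K : Type*} [TopologicalSpace K]

theorem exists_eqOn_const_of_summable {K : Type} [TopologicalSpace K] [CompactSpace K] [T2Space K] {Fs : ℕ → Set K}
    {F : Set K} (hFsclosed : ∀ n, IsClosed (Fs n)) (hFclosed : IsClosed F)
    (hdisj : ∀ n m, n ≠ m → Fs n ∩ Fs m = ∅)
    (hcluster : ∀ x, IsClusterPointOfSets Fs x → x ∈ F) (hFF : ∀ n, Fs n ∩ F = ∅)
    {c : ℕ → ℝ} (hc : Summable fun n => ‖c n‖) :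
    ∃ ψ : C(K, ℝ), (∀ n, EqOn ψ (fun _ => c n) (Fs n)) ∧ EqOn ψ 0 F := by
  have hsep : ∀ n, Disjoint (F ∪ ⋃ m ∈ {m | m ≠ n}, Fs m) (Fs n) := fun n =>
    disjoint_union_left.2 ⟨disjoint_iff_inter_eq_empty.2 (inter_comm F _ ▸ hFF n),
      disjoint_iUnion₂_left.2 fun m hm => disjoint_iff_inter_eq_empty.2 (hdisj m n hm)⟩
  choose u hu0 hu1 hu01 using fun n => exists_continuous_zero_one_of_isClosed
    (isClosed_union_biUnion hFsclosed hFclosed hcluster {m | m ≠ n}) (hFsclosed n) (hsep n)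
  have hsum : Summable fun n => c n • u n := by
    refine hc.of_norm_bounded fun n => ?_
    rw [norm_smul]
    refine mul_le_of_le_one_right (norm_nonneg _) ((ContinuousMap.norm_le _ zero_le_one).2 ?_)
    exact fun x => abs_le.2 ⟨by linarith [(hu01 n x).1], (hu01 n x).2⟩
  have hψ : ∀ x, (∑' n, c n • u n) x = ∑' n, c n * u n x := fun x =>
    (ContinuousMap.evalCLM ℝ x).map_tsum hsum
  refine ⟨∑' n, c n • u n, fun n x hx => ?_, fun x hx => ?_⟩
  · have hux : ∀ m, c m * u m x = if m = n then c n else 0 := fun m => by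
      split_ifs with hmn
      · simp [hmn, hu1 n hx]
      · simp [hu0 m (Or.inr (mem_biUnion (Ne.symm hmn) hx))]
    simp only [hψ, hux, tsum_ite_eq]
  · simp [hψ, hu0 _ (Or.inl hx)]

theorem preimage_closedBall_inter_closure_eq_empty (ψ : C(K, ℝ)) {c : ℕ → ℝ}
    (hc0 : ∀ n, 0 < c n) (hc : ∀ m n, m < n → 2 * c n ≤ c m) (n : ℕ) :
    ψ ⁻¹' Metric.closedBall (c n) (c n / 10) ∩
      closure (⋃ m ∈ {m | m ≠ n}, ψ ⁻¹' Metric.closedBall (c m) (c m / 10)) = ∅ := by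
  have hfar : ∀ m ≠ n, Metric.closedBall (c m) (c m / 10) ⊆ (Metric.ball (c n) (c n / 4))ᶜ := by
    intro m hmn t ht hnear
    rw [Metric.mem_closedBall, Real.dist_eq, abs_le] at ht
    rw [Metric.mem_ball, Real.dist_eq, abs_lt] at hnear
    have := hc0 m
    have := hc0 n
    rcases lt_or_gt_of_ne hmn with h | h
    · linarith [hc m n h]
    · linarith [hc n m h]
  have hclosure : closure (⋃ m ∈ {m | m ≠ n}, ψ ⁻¹' Metric.closedBall (c m) (c m / 10)) ⊆
      ψ ⁻¹' (Metric.ball (c n) (c n / 4))ᶜ :=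
    closure_minimal (iUnion₂_subset fun m hm => preimage_mono (hfar m hm))
      (Metric.isOpen_ball.isClosed_compl.preimage ψ.continuous)
  have hnear : ψ ⁻¹' Metric.closedBall (c n) (c n / 10) ⊆ ψ ⁻¹' Metric.ball (c n) (c n / 4) :=
    preimage_mono (Metric.closedBall_subset_ball (by linarith [hc0 n]))
  exact disjoint_iff_inter_eq_empty.1 ((disjoint_compl_right.preimage ψ).mono hnear hclosure)

theorem exists_restrict_eq_norm_le_tsupport_subset [CompactSpace K] [NormalSpace K]
    {s : Set K} [CompactSpace s] (hs : IsClosed s) {φ : C(K, ℝ)}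
    (hφ : ∀ x, φ x ∈ Icc 0 1) (hφs : EqOn φ 1 s) (g : C(s, ℝ)) :
    ∃ h : C(K, ℝ), h.restrict s = g ∧ ‖h‖ ≤ ‖g‖ ∧ tsupport h ⊆ tsupport φ := by
  obtain ⟨e, he_norm, he⟩ := BoundedContinuousFunction.exists_norm_eq_domRestrict_eq hs ℝ
    (BoundedContinuousFunction.mkOfCompact g)
  refine ⟨φ * e.toContinuousMap, ?_, ?_, tsupport_mul_subset_left⟩
  · ext x
    simpa [hφs x.2] using congr($he x)
  · refine (ContinuousMap.norm_le _ (norm_nonneg g)).2 fun x => ?_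
    calc ‖φ x * e x‖ = |φ x| * ‖e x‖ := norm_mul _ _
      _ ≤ 1 * ‖e‖ := by
        gcongr
        · exact abs_le.2 ⟨by linarith [(hφ x).1], (hφ x).2⟩
        · exact e.norm_coe_le_norm x
      _ = ‖g‖ := by rw [one_mul, he_norm, BoundedContinuousFunction.norm_mkOfCompact]

end Separation

section LiftedFunctionals

variable {K : Type*} [TopologicalSpace K]

noncomputable def restrictCLM (s : Set K) : C(K, ℝ) →L[ℝ] C(s, ℝ) :=
  ContinuousMap.compCLM ℝ ℝ ((ContinuousMap.id K).restrict s)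

theorem norm_restrictCLM_le [CompactSpace K] (s : Set K) [CompactSpace s] : ‖restrictCLM s‖ ≤ 1 :=
  ContinuousLinearMap.opNorm_le_bound _ zero_le_one fun g =>
    (one_mul ‖g‖).symm ▸ (ContinuousMap.norm_le _ (norm_nonneg g)).2 fun x => g.norm_coe_le_norm x

variable {F : Set K} (E : C(F, ℝ) →L[ℝ] C(K, ℝ))

noncomputable def kerRestrictProj : C(K, ℝ) →L[ℝ] C(K, ℝ) :=
  ContinuousLinearMap.id ℝ _ - E ∘L restrictCLM F

theorem kerRestrictProj_apply (g : C(K, ℝ)) : kerRestrictProj E g = g - E (g.restrict F) := rfl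

theorem kerRestrictProj_apply_of_mem (hE : ∀ g : C(F, ℝ), (E g).restrict F = g)
    (g : C(K, ℝ)) {x : K} (hx : x ∈ F) : kerRestrictProj E g x = 0 := by
  rw [kerRestrictProj_apply, ContinuousMap.sub_apply, sub_eq_zero]
  exact congr($(hE (g.restrict F)) ⟨x, hx⟩).symm

theorem kerRestrictProj_eq_self {g : C(K, ℝ)} (hg : ∀ x ∈ F, g x = 0) :
    kerRestrictProj E g = g := by
  have : g.restrict F = 0 := ContinuousMap.ext fun x => hg x x.2
  rw [kerRestrictProj_apply, this, map_zero, sub_zero]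

theorem norm_kerRestrictProj_le [CompactSpace K] [CompactSpace F] :
    ‖kerRestrictProj E‖ ≤ 1 + ‖E‖ :=
  calc ‖kerRestrictProj E‖
      ≤ ‖ContinuousLinearMap.id ℝ C(K, ℝ)‖ + ‖E ∘L restrictCLM F‖ :=
        norm_sub_le (ContinuousLinearMap.id ℝ C(K, ℝ)) (E ∘L restrictCLM F)
    _ ≤ ‖ContinuousLinearMap.id ℝ C(K, ℝ)‖ + ‖E‖ * ‖restrictCLM F‖ := by
        gcongr; exact E.opNorm_comp_le _
    _ ≤ 1 + ‖E‖ * 1 := by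
        gcongr
        · exact ContinuousLinearMap.norm_id_le
        · exact norm_restrictCLM_le F
    _ = 1 + ‖E‖ := by rw [mul_one]

noncomputable def liftDual (s : Set K) (γ : C(s, ℝ) →L[ℝ] ℝ) : C(K, ℝ) →L[ℝ] ℝ :=
  γ ∘L restrictCLM s ∘L kerRestrictProj E

theorem liftDual_apply (s : Set K) (γ : C(s, ℝ) →L[ℝ] ℝ) (g : C(K, ℝ)) :
    liftDual E s γ g = γ ((kerRestrictProj E g).restrict s) := rfl

theorem liftDual_apply_of_eqOn_zero (s : Set K) (γ : C(s, ℝ) →L[ℝ] ℝ) {g : C(K, ℝ)}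
    (hg : ∀ x ∈ F, g x = 0) : liftDual E s γ g = γ (g.restrict s) := by
  rw [liftDual_apply, kerRestrictProj_eq_self E hg]

theorem norm_liftDual_le [CompactSpace K] [CompactSpace F] (s : Set K) [CompactSpace s] (γ : C(s, ℝ) →L[ℝ] ℝ) :
    ‖liftDual E s γ‖ ≤ ‖γ‖ * (1 + ‖E‖) :=
  calc ‖liftDual E s γ‖ ≤ ‖γ‖ * (‖restrictCLM s‖ * ‖kerRestrictProj E‖) :=
        (γ.opNorm_comp_le _).trans (by gcongr; exact ContinuousLinearMap.opNorm_comp_le _ _)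
    _ ≤ ‖γ‖ * (1 * (1 + ‖E‖)) := by
        gcongr
        · exact norm_restrictCLM_le s
        · exact norm_kerRestrictProj_le E
    _ = ‖γ‖ * (1 + ‖E‖) := by rw [one_mul]

theorem liftDual_apply_eq_ite {ι : Type*} {Fs : ℕ → Set K} {f : ∀ n, ι → C(Fs n, ℝ)}
    {γ : ∀ n, ι → C(Fs n, ℝ) →L[ℝ] ℝ} (hbiorth : ∀ n α β, γ n α (f n β) = if α = β then 1 else 0)
    {h : ℕ → ι → C(K, ℝ)} (hF : ∀ m β, ∀ x ∈ F, h m β x = 0)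
    (hself : ∀ n β, (h n β).restrict (Fs n) = f n β)
    (hother : ∀ n m β, n ≠ m → ∀ x ∈ Fs n, h m β x = 0) (n : ℕ) (α : ι) (m : ℕ) (β : ι) :
    liftDual E (Fs n) (γ n α) (h m β) = if (n, α) = (m, β) then 1 else 0 := by
  rw [liftDual_apply_of_eqOn_zero E _ _ (hF m β)]
  obtain rfl | hnm := eq_or_ne n m
  · simp [hself, hbiorth]
  · have : (h m β).restrict (Fs n) = 0 := ContinuousMap.ext fun x => hother n m β hnm x x.2
    simp [this, hnm]

end LiftedFunctionals

theorem finite_setOf_le_abs_apply_of_tendsto {ι : Type*} {X : ℕ → Type*}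
    [∀ n, SeminormedAddCommGroup (X n)] [∀ n, NormedSpace ℝ (X n)]
    {γ : ∀ n, ι → X n →L[ℝ] ℝ} {C : ℝ} (hC : ∀ n α, ‖γ n α‖ ≤ C)
    (hnull : ∀ n (v : X n) (ε : ℝ), 0 < ε → {α | ε ≤ |γ n α v|}.Finite)
    {v : ∀ n, X n} (hv : Tendsto (fun n => ‖v n‖) cofinite (𝓝 0)) {ε : ℝ} (hε : 0 < ε) :
    {p : ℕ × ι | ε ≤ |γ p.1 p.2 (v p.1)|}.Finite := by
  have hsmall : ∀ᶠ n in cofinite, C * ‖v n‖ < ε := by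
    simpa using (hv.const_mul C).eventually (gt_mem_nhds (by simpa using hε))
  refine ((eventually_cofinite.1 hsmall).biUnion fun n _ =>
    (hnull n (v n) ε hε).image (Prod.mk n)).subset ?_
  rintro ⟨n, α⟩ hp
  refine mem_biUnion (fun hn => (not_le.2 ?_) (show ε ≤ |γ n α (v n)| from hp)) ⟨α, hp, rfl⟩
  calc |γ n α (v n)| ≤ ‖γ n α‖ * ‖v n‖ := (γ n α).le_opNorm _
    _ ≤ C * ‖v n‖ := by gcongr; exact hC n α
    _ < ε := hn

theorem finite_setOf_le_abs_liftDual {K : Type} [TopologicalSpace K] [CompactSpace K]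
    {Fs : ℕ → Set K} [∀ n, CompactSpace (Fs n)] {F : Set K}
    (hcluster : ∀ x, IsClusterPointOfSets Fs x → x ∈ F) {E : C(F, ℝ) →L[ℝ] C(K, ℝ)}
    (hE : ∀ g : C(F, ℝ), (E g).restrict F = g) {ι : Type*} {γ : ∀ n, ι → C(Fs n, ℝ) →L[ℝ] ℝ}
    {C : ℝ} (hC : ∀ n α, ‖γ n α‖ ≤ C)
    (hnull : ∀ n (v : C(Fs n, ℝ)) (ε : ℝ), 0 < ε → {α | ε ≤ |γ n α v|}.Finite)
    (g : C(K, ℝ)) {ε : ℝ} (hε : 0 < ε) :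
    {p : ℕ × ι | ε ≤ |liftDual E (Fs p.1) (γ p.1 p.2) g|}.Finite :=
  finite_setOf_le_abs_apply_of_tendsto hC hnull
    (tendsto_norm_restrict_cofinite_zero hcluster fun _ => kerRestrictProj_apply_of_mem E hE g) hε

theorem exists_separated_extension_domains {K : Type} [TopologicalSpace K] [CompactSpace K]
    [T2Space K] {Fs : ℕ → Set K} [∀ n, CompactSpace (Fs n)] {F : Set K}
    (hFsclosed : ∀ n, IsClosed (Fs n)) (hFclosed : IsClosed F)
    (hdisj : ∀ n m, n ≠ m → Fs n ∩ Fs m = ∅)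
    (hcluster : ∀ x, IsClusterPointOfSets Fs x → x ∈ F) (hFF : ∀ n, Fs n ∩ F = ∅) :
    ∃ G : ℕ → Set K, (∀ n, IsClosed (G n)) ∧
      (∀ n, G n ∩ closure (⋃ m ∈ {m : ℕ | m ≠ n}, G m) = ∅) ∧
      (∀ n, Disjoint (G n) F) ∧ (∀ n m, n ≠ m → Disjoint (G n) (Fs m)) ∧
      ∀ n (g : C(Fs n, ℝ)), ∃ h : C(K, ℝ), h.restrict (Fs n) = g ∧ ‖h‖ ≤ ‖g‖ ∧ tsupport h ⊆ G n := by
  set c : ℕ → ℝ := fun n => 2⁻¹ ^ n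
  have hc0 : ∀ n, 0 < c n := fun n => by positivity
  have hc : ∀ m n, m < n → 2 * c n ≤ c m := fun m n hmn => by
    have : c n ≤ c (m + 1) := pow_le_pow_of_le_one (by norm_num) (by norm_num) hmn
    simp only [c, pow_succ] at this ⊢
    linarith
  obtain ⟨ψ, hψFs, hψF⟩ := exists_eqOn_const_of_summable hFsclosed hFclosed hdisj hcluster hFF
    (c := c) (by simpa [c] using summable_geometric_two)
  set G : ℕ → Set K := fun n => ψ ⁻¹' Metric.closedBall (c n) (c n / 10)
  have hsep := preimage_closedBall_inter_closure_eq_empty ψ hc0 hc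
  have hFsG : ∀ n, Fs n ⊆ G n := fun n x hx => by
    have := hc0 n
    simp only [G, mem_preimage, hψFs n hx, Metric.mem_closedBall, dist_self]
    positivity
  refine ⟨G, fun n => Metric.isClosed_closedBall.preimage ψ.continuous, hsep, fun n => ?_,
    fun n m hnm => ?_, fun n g => ?_⟩
  · refine disjoint_left.2 fun x hxG hxF => ?_
    have := hc0 n
    simp only [G, mem_preimage, hψF hxF, Pi.zero_apply, Metric.mem_closedBall, dist_zero_left,
      Real.norm_eq_abs, abs_of_pos this] at hxG
    linarith
  · exact (disjoint_iff_inter_eq_empty.2 (hsep n)).mono_right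
      ((hFsG m).trans ((subset_biUnion_of_mem hnm.symm).trans subset_closure))
  · obtain ⟨φ, hφG, hφ1, hφ01⟩ := exists_tsupport_one_of_isOpen_isClosed
      (s := ψ ⁻¹' Metric.ball (c n) (c n / 10)) (Metric.isOpen_ball.preimage ψ.continuous)
      isClosed_closure.isCompact (hFsclosed n) fun x hx => by
        have := hc0 n
        simp only [mem_preimage, hψFs n hx, Metric.mem_ball, dist_self]
        positivity
    obtain ⟨h, hres, hnorm, hsupp⟩ :=
      exists_restrict_eq_norm_le_tsupport_subset (hFsclosed n) hφ01 hφ1 g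
    exact ⟨h, hres, hnorm, hsupp.trans (hφG.trans (preimage_mono Metric.ball_subset_closedBall))⟩
/-- if `K` has pairwise disjoint closed sets `(F_n)` and a closed set `F`
such that (a) `F` admits an extension operator in `K`, (b) all cluster points of `(F_n)`
lie in `F` and `F_n ∩ F = ∅`, and (c) each `C(F_n)` has a weak*-null biorthogonal system
of cardinality `𝔠`, uniformly bounded in `n`, then `K` satisfies property (∗). -/
theorem statement7 (K : Type) [TopologicalSpace K] [CompactSpace K] [T2Space K]
    (Fs : ℕ → Set K) (F : Set K)
    (hFsclosed : ∀ n, IsClosed (Fs n)) (hFclosed : IsClosed F)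
    [∀ n, CompactSpace ↥(Fs n)] [CompactSpace ↥F]
    (hdisj : ∀ n m, n ≠ m → Fs n ∩ Fs m = ∅)
    -- (a) extension operator for F in K
    (E : C(↥F, ℝ) →L[ℝ] C(K, ℝ)) (hE : ∀ g : C(↥F, ℝ), (E g).restrict F = g)
    -- (b)
    (hcluster : ∀ x : K, IsClusterPointOfSets Fs x → x ∈ F)
    (hFF : ∀ n, Fs n ∩ F = ∅)
    -- (c)
    (ι : Type) (hι : #ι = Cardinal.continuum)
    (f : ∀ n : ℕ, ι → C(↥(Fs n), ℝ)) (γ : ∀ n : ℕ, ι → (C(↥(Fs n), ℝ) →L[ℝ] ℝ))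
    (hbiorth : ∀ n α β, γ n α (f n β) = if α = β then (1 : ℝ) else 0)
    (hwstarnull : ∀ n, ∀ g : C(↥(Fs n), ℝ), ∀ ε : ℝ, 0 < ε → {α : ι | ε ≤ |γ n α g|}.Finite)
    (hbdd : ∃ C : ℝ, ∀ n α, ‖f n α‖ ≤ C ∧ ‖γ n α‖ ≤ C) :
    PropertyStar K := by
  obtain ⟨C, hC⟩ := hbdd
  obtain ⟨G, hGclosed, hGsep, hGF, hGFs, hext⟩ :=
    exists_separated_extension_domains hFsclosed hFclosed hdisj hcluster hFF
  choose h hh_restrict hh_norm hh_supp using fun n α => hext n (f n α)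
  have hvanish : ∀ m β x, x ∉ G m → h m β x = 0 := fun m β x hx =>
    image_eq_zero_of_notMem_tsupport fun hx' => hx (hh_supp m β hx')
  refine ⟨ι, hι, G, h, fun n α => liftDual E (Fs n) (γ n α), hGclosed, hGsep,
    liftDual_apply_eq_ite E hbiorth
      (fun m β x hx => hvanish m β x fun hxG => (hGF m).notMem_of_mem_left hxG hx) hh_restrict
      (fun n m β hnm x hx => hvanish m β x fun hxG => (hGFs m n hnm.symm).notMem_of_mem_left hxG hx),
    ⟨max C (C * (1 + ‖E‖)), fun n α => ⟨?_, ?_⟩⟩,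
    fun g ε hε => finite_setOf_le_abs_liftDual hcluster hE (fun n α => (hC n α).2) hwstarnull g hε,
    hh_supp⟩
  · exact le_max_of_le_left ((hh_norm n α).trans (hC n α).1)
  · exact le_max_of_le_right ((norm_liftDual_le E _ _).trans (by gcongr; exact (hC n α).2))
end

section
/- Let K be a compact Hausdorff space and (F_n)_{n∈ω} a sequence of pairwise disjoint closed subsets such that every cluster point of (F_n) lies in a closed set F disjoint from all F_n. Then there exists a sequence (U_n)_{n∈ω} of pairwise disjoint open subsets of K with F_n ⊆ U_n and closure(U_n) ∩ F = ∅ for all n. -/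
open Set Filter Topology Function

theorem exists_mem_nhds_finite_of_not_isClusterPointOfSets {K : Type} [TopologicalSpace K]
    {S : ℕ → Set K} {x : K} (hx : ¬ IsClusterPointOfSets S x) :
    ∃ U ∈ 𝓝 x, {n | (S n ∩ U).Nonempty}.Finite := by
  simpa [IsClusterPointOfSets] using hx

theorem isClosed_union_biUnion_of_locallyFinite_off {X ι : Type*} [TopologicalSpace X]
    {F : Set X} {f : ι → Set X} (hF : IsClosed F) (hf : ∀ i, IsClosed (f i))
    (hfin : ∀ x ∉ F, ∃ U ∈ 𝓝 x, {i | (f i ∩ U).Nonempty}.Finite) (s : Set ι) :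
    IsClosed (F ∪ ⋃ i ∈ s, f i) := by
  refine isOpen_compl_iff.1 (isOpen_iff_mem_nhds.2 fun x hx => ?_)
  obtain ⟨hxF, hxf⟩ : x ∉ F ∧ x ∉ ⋃ i ∈ s, f i := by simpa using hx
  obtain ⟨U, hU, hUfin⟩ := hfin x hxF
  have hnear : IsOpen (⋃ i ∈ {i | (f i ∩ U).Nonempty} ∩ s, f i)ᶜ :=
    ((hUfin.inter_of_left s).isClosed_biUnion fun i _ => hf i).isOpen_compl
  have hx_near : x ∈ (⋃ i ∈ {i | (f i ∩ U).Nonempty} ∩ s, f i)ᶜ := fun h =>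
    hxf (biUnion_subset_biUnion_left inter_subset_right h)
  filter_upwards [hF.isOpen_compl.mem_nhds hxF, hU, hnear.mem_nhds hx_near] with y hyF hyU hy_near
  simp only [mem_compl_iff, mem_union, mem_iUnion, not_or, not_exists]
  exact ⟨hyF, fun i hi hyi => hy_near (mem_biUnion ⟨⟨y, hyi, hyU⟩, hi⟩ hyi)⟩

theorem exists_pairwise_disjoint_open_of_disjoint_closed {X : Type*} [TopologicalSpace X]
    [NormalSpace X] {Fs C : ℕ → Set X} (hFs : ∀ n, IsClosed (Fs n)) (hC : ∀ n, IsClosed (C n))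
    (hFsC : ∀ n, Disjoint (Fs n) (C n)) (hsub : ∀ m n, m ≠ n → Fs m ⊆ C n) :
    ∃ U : ℕ → Set X, (∀ n, IsOpen (U n)) ∧ (∀ n, Fs n ⊆ U n) ∧
      Pairwise (Disjoint on U) ∧ ∀ n, Disjoint (closure (U n)) (C n) := by
  choose W hWo hFW hWC using fun n =>
    normal_exists_closure_subset (hFs n) (hC n).isOpen_compl (hFsC n).subset_compl_right
  have hU_sub : ∀ n, W n ∩ ⋂ m ∈ Iio n, (closure (W m))ᶜ ⊆ W n := fun n => inter_subset_left
  refine ⟨fun n => W n ∩ ⋂ m ∈ Iio n, (closure (W m))ᶜ, fun n => ?_, fun n => ?_, ?_, fun n => ?_⟩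
  · exact (hWo n).inter ((finite_Iio n).isOpen_biInter fun m _ => isClosed_closure.isOpen_compl)
  · refine subset_inter (hFW n) (subset_iInter₂ fun m hm x hx hxW => ?_)
    exact hWC m hxW (hsub n m (ne_of_gt hm) hx)
  · refine (pairwise_disjoint_on _).2 fun m n hmn => disjoint_left.2 fun x hxm hxn => ?_
    exact mem_iInter₂.1 hxn.2 m hmn (subset_closure (hU_sub m hxm))
  · exact disjoint_compl_left.mono_left ((closure_mono (hU_sub n)).trans (hWC n))

/-- given pairwise disjoint closed sets `(F_n)` in a compact Hausdorff space,
all disjoint from a closed set `F` containing every cluster point of `(F_n)`, there are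
pairwise disjoint open sets `U_n ⊇ F_n` whose closures are disjoint from `F`. -/
theorem statement9 (K : Type) [TopologicalSpace K] [CompactSpace K] [T2Space K]
    (Fs : ℕ → Set K) (hFs : ∀ n, IsClosed (Fs n))
    (hdisj : ∀ n m, n ≠ m → Fs n ∩ Fs m = ∅)
    (F : Set K) (hF : IsClosed F) (hdisjF : ∀ n, Fs n ∩ F = ∅)
    (hcluster : ∀ x : K, IsClusterPointOfSets Fs x → x ∈ F) :
    ∃ U : ℕ → Set K,
      (∀ n, IsOpen (U n)) ∧ (∀ n, Fs n ⊆ U n) ∧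
      (∀ n m, n ≠ m → U n ∩ U m = ∅) ∧
      (∀ n, closure (U n) ∩ F = ∅) := by
  have hfin : ∀ x ∉ F, ∃ U ∈ 𝓝 x, {n | (Fs n ∩ U).Nonempty}.Finite := fun x hx =>
    exists_mem_nhds_finite_of_not_isClusterPointOfSets (mt (hcluster x) hx)
  have hFsC : ∀ n, Disjoint (Fs n) (F ∪ ⋃ m ∈ {m | m ≠ n}, Fs m) := fun n => by
    simp only [disjoint_union_right, disjoint_iUnion_right]
    exact ⟨disjoint_iff_inter_eq_empty.2 (hdisjF n),
      fun m hm => disjoint_iff_inter_eq_empty.2 (hdisj n m (Ne.symm hm))⟩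
  obtain ⟨U, hUo, hFsU, hUdisj, hUC⟩ := exists_pairwise_disjoint_open_of_disjoint_closed hFs
    (fun n => isClosed_union_biUnion_of_locallyFinite_off hF hFs hfin _) hFsC
    (fun m n hmn => subset_union_of_subset_right (subset_biUnion_of_mem (u := Fs) hmn) _)
  exact ⟨U, hUo, hFsU, fun n m hnm => disjoint_iff_inter_eq_empty.1 (hUdisj hnm),
    fun n => disjoint_iff_inter_eq_empty.1 ((hUC n).mono_right subset_union_left)⟩
end

section
/- Let K be a compact Hausdorff space such that C(K) admits a bounded weak*-null biorthogonal system of cardinality 𝔠. Then the space [0,ω] × K satisfies property (∗), where [0,ω] is the convergent sequence (one-point compactification of ω). -/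
open Cardinal
open scoped Classical

/-- The singleton `{↑n}` is open in `OnePoint ℕ`. -/
lemma isOpen_singleton_coe (n : ℕ) : IsOpen ({(n : OnePoint ℕ)} : Set (OnePoint ℕ)) := by
  have := OnePoint.isOpenMap_coe (X := ℕ) {n} (isOpen_discrete _)
  simpa using this

/-- The indicator of `{↑n}` as a continuous map. -/
noncomputable def chi (n : ℕ) : C(OnePoint ℕ, ℝ) :=
  ⟨fun x => if x = (n : OnePoint ℕ) then 1 else 0, by
    refine IsLocallyConstant.continuous fun s => ?_
    by_cases h1 : (1 : ℝ) ∈ s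
    · by_cases h0 : (0 : ℝ) ∈ s
      · convert isOpen_univ using 1
        ext x; by_cases h : x = (n : OnePoint ℕ) <;> simp [h, h0, h1]
      · convert isOpen_singleton_coe n using 1
        ext x; by_cases h : x = (n : OnePoint ℕ) <;> simp [h, h0, h1]
    · by_cases h0 : (0 : ℝ) ∈ s
      · convert (isClosed_singleton (x := (n : OnePoint ℕ))).isOpen_compl using 1
        ext x; by_cases h : x = (n : OnePoint ℕ) <;> simp [h, h0, h1]
      · convert isOpen_empty using 1
        ext x; by_cases h : x = (n : OnePoint ℕ) <;> simp [h, h0, h1]⟩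

lemma chi_apply (n : ℕ) (x : OnePoint ℕ) :
    chi n x = if x = (n : OnePoint ℕ) then 1 else 0 := rfl

/-- Restriction to the slice `{x} × K` as a continuous linear map. -/
noncomputable def sliceCLM (K : Type) [TopologicalSpace K] [CompactSpace K]
    (x : OnePoint ℕ) : C(OnePoint ℕ × K, ℝ) →L[ℝ] C(K, ℝ) :=
  LinearMap.mkContinuous
    { toFun := fun g => g.curry x
      map_add' := fun g h => by ext k; simp [ContinuousMap.curry_apply]
      map_smul' := fun c g => by ext k; simp [ContinuousMap.curry_apply] }
    1 (fun g => by
      rw [one_mul]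
      refine (ContinuousMap.norm_le _ (norm_nonneg g)).mpr fun k => ?_
      simpa [ContinuousMap.curry_apply] using g.norm_coe_le_norm (x, k))

lemma sliceCLM_apply (K : Type) [TopologicalSpace K] [CompactSpace K]
    (x : OnePoint ℕ) (g : C(OnePoint ℕ × K, ℝ)) (k : K) :
    sliceCLM K x g k = g (x, k) := rfl

lemma sliceCLM_norm_le (K : Type) [TopologicalSpace K] [CompactSpace K]
    (x : OnePoint ℕ) : ‖sliceCLM K x‖ ≤ 1 :=
  LinearMap.mkContinuous_norm_le _ zero_le_one _

/-- if `C(K)` admits a bounded weak*-null biorthogonal system of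
cardinality `𝔠`, then `[0,ω] × K` satisfies property (∗), where `[0,ω]` is the one-point
compactification of `ω` (a convergent sequence). -/
theorem statement10 (K : Type) [TopologicalSpace K] [CompactSpace K] [T2Space K]
    (ι : Type) (hι : #ι = Cardinal.continuum)
    (f : ι → C(K, ℝ)) (γ : ι → (C(K, ℝ) →L[ℝ] ℝ))
    (hbiorth : ∀ α β, γ α (f β) = if α = β then (1 : ℝ) else 0)
    (hbdd : ∃ C : ℝ, ∀ α, ‖f α‖ ≤ C ∧ ‖γ α‖ ≤ C)
    (hwstarnull : ∀ g : C(K, ℝ), ∀ ε : ℝ, 0 < ε → {α : ι | ε ≤ |γ α g|}.Finite) :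
    PropertyStar (OnePoint ℕ × K) := by
  obtain ⟨C, hC⟩ := hbdd
  have hneι : Nonempty ι := by
    rw [← Cardinal.mk_ne_zero_iff, hι]
    exact Cardinal.continuum_ne_zero
  obtain ⟨α₀⟩ := hneι
  have hC0 : 0 ≤ C := le_trans (ContinuousLinearMap.opNorm_nonneg _) (hC α₀).2
  set C' : ℝ := max C 1 with hC'def
  have hC'pos : 0 < C' := lt_of_lt_of_le one_pos (le_max_right _ _)
  -- the data
  refine ⟨ι, hι, fun n => {p | p.1 = (n : OnePoint ℕ)},
    fun n α => (chi n).comp ⟨Prod.fst, continuous_fst⟩ * (f α).comp ⟨Prod.snd, continuous_snd⟩,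
    fun n α => (γ α).comp (sliceCLM K (n : OnePoint ℕ) - sliceCLM K OnePoint.infty),
    ?_, ?_, ?_, ?_, ?_, ?_⟩
  · intro n
    exact IsClosed.preimage continuous_fst isClosed_singleton
  · -- separation
    intro n
    have hcl : closure (⋃ m ∈ {m : ℕ | m ≠ n}, {p : OnePoint ℕ × K | p.1 = (m : OnePoint ℕ)})
        ⊆ {p : OnePoint ℕ × K | p.1 ≠ (n : OnePoint ℕ)} := by
      refine closure_minimal ?_ ?_
      · rintro p hp
        simp only [Set.mem_iUnion] at hp
        obtain ⟨m, hm, hpm⟩ := hp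
        simp only [Set.mem_setOf_eq] at hpm hm ⊢
        rw [hpm]
        simpa [OnePoint.coe_eq_coe] using hm
      · exact IsClosed.preimage continuous_fst (isOpen_singleton_coe n).isClosed_compl
    ext p
    simp only [Set.mem_inter_iff, Set.mem_setOf_eq, Set.mem_empty_iff_false, iff_false,
      not_and]
    intro hp hcl'
    exact (hcl hcl') hp
  · -- biorthogonality
    intro n α m β
    have hinf : sliceCLM K OnePoint.infty
        ((chi m).comp ⟨Prod.fst, continuous_fst⟩ * (f β).comp ⟨Prod.snd, continuous_snd⟩) = 0 := by
      ext k
      simp [sliceCLM_apply, chi_apply, (OnePoint.infty_ne_coe (m : ℕ))]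
    by_cases hnm : n = m
    · subst hnm
      have hs : sliceCLM K (n : OnePoint ℕ)
          ((chi n).comp ⟨Prod.fst, continuous_fst⟩ * (f β).comp ⟨Prod.snd, continuous_snd⟩)
          = f β := by
        ext k
        simp [sliceCLM_apply, chi_apply]
      simp only [ContinuousLinearMap.comp_apply, ContinuousLinearMap.sub_apply, hinf, hs,
        sub_zero, map_sub, map_zero]
      by_cases hab : α = β <;> simp [hbiorth, hab, Prod.ext_iff]
    · have hs : sliceCLM K (n : OnePoint ℕ)
          ((chi m).comp ⟨Prod.fst, continuous_fst⟩ * (f β).comp ⟨Prod.snd, continuous_snd⟩)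
          = 0 := by
        ext k
        have : (n : OnePoint ℕ) ≠ (m : OnePoint ℕ) := by
          simpa [OnePoint.coe_eq_coe] using hnm
        simp [sliceCLM_apply, chi_apply, this]
      simp only [ContinuousLinearMap.comp_apply, ContinuousLinearMap.sub_apply, hinf, hs,
        sub_zero, map_zero]
      rw [if_neg]
      simp [Prod.ext_iff, hnm]
  · -- bounds
    refine ⟨2 * C', fun n α => ⟨?_, ?_⟩⟩
    · refine le_trans ((ContinuousMap.norm_le _ (by positivity)).mpr fun p => ?_) ?_
      · have h1 : |chi n p.1| ≤ 1 := by
          rw [chi_apply]; split_ifs <;> simp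
        have h2 : |f α p.2| ≤ C := le_trans ((f α).norm_coe_le_norm p.2) (hC α).1
        calc ‖chi n p.1 * f α p.2‖ = |chi n p.1| * |f α p.2| := abs_mul _ _
          _ ≤ 1 * C := mul_le_mul h1 h2 (abs_nonneg _) zero_le_one
          _ = C := one_mul C
      · calc C ≤ C' := le_max_left _ _
          _ ≤ 2 * C' := by linarith
    · refine le_trans (ContinuousLinearMap.opNorm_comp_le _ _) ?_
      have hone : ∀ (x : OnePoint ℕ) (h' : C(OnePoint ℕ × K, ℝ)),
          ‖sliceCLM K x h'‖ ≤ ‖h'‖ := fun x h' =>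
        ((sliceCLM K x).le_opNorm h').trans
          (mul_le_of_le_one_left (norm_nonneg h') (sliceCLM_norm_le K x))
      have hd : ‖sliceCLM K (n : OnePoint ℕ) - sliceCLM K OnePoint.infty‖ ≤ 2 := by
        refine ContinuousLinearMap.opNorm_le_bound _ (by norm_num) fun h' => ?_
        rw [ContinuousLinearMap.sub_apply]
        calc ‖sliceCLM K (n : OnePoint ℕ) h' - sliceCLM K OnePoint.infty h'‖
            ≤ ‖sliceCLM K (n : OnePoint ℕ) h'‖ + ‖sliceCLM K OnePoint.infty h'‖ :=
              norm_sub_le _ _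
          _ ≤ ‖h'‖ + ‖h'‖ := add_le_add (hone _ _) (hone _ _)
          _ = 2 * ‖h'‖ := by ring
      calc ‖γ α‖ * ‖sliceCLM K (n : OnePoint ℕ) - sliceCLM K OnePoint.infty‖
          ≤ C * 2 := mul_le_mul (hC α).2 hd (ContinuousLinearMap.opNorm_nonneg _) hC0
        _ ≤ C' * 2 := by have := le_max_left C 1; linarith
        _ = 2 * C' := mul_comm _ _
  · -- weak*-null
    intro g ε hε
    set gInf : C(K, ℝ) := sliceCLM K OnePoint.infty g with hgInf
    have htend : Filter.Tendsto (fun n : ℕ => g.curry (n : OnePoint ℕ))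
        Filter.cofinite (nhds (g.curry OnePoint.infty)) := by
      have h1 : Filter.Tendsto ((↑) : ℕ → OnePoint ℕ) Filter.cofinite
          (nhds (OnePoint.infty : OnePoint ℕ)) := by
        have := OnePoint.tendsto_coe_infty (X := ℕ)
        rwa [Filter.coclosedCompact_eq_cocompact, Filter.cocompact_eq_cofinite] at this
      exact (g.curry.continuous.tendsto _).comp h1
    have hNfin : {n : ℕ | ε / C' ≤ ‖g.curry (n : OnePoint ℕ) - g.curry OnePoint.infty‖}.Finite := by
      have hball := htend (Metric.ball_mem_nhds (g.curry OnePoint.infty)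
        (by positivity : (0:ℝ) < ε / C'))
      rw [Filter.mem_map, Filter.mem_cofinite] at hball
      refine hball.subset fun n hn => ?_
      simp only [Set.mem_setOf_eq] at hn
      simp only [Set.mem_compl_iff, Set.mem_preimage, Metric.mem_ball, dist_eq_norm, not_lt]
      exact hn
    refine Set.Finite.subset (Set.Finite.biUnion hNfin
      (fun n _ => (Set.finite_singleton n).prod
        (hwstarnull (sliceCLM K (n : OnePoint ℕ) g - gInf) ε hε))) ?_
    rintro ⟨n, α⟩ hmem
    simp only [Set.mem_setOf_eq, ContinuousLinearMap.comp_apply,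
      ContinuousLinearMap.sub_apply] at hmem
    have hcurry : ∀ x : OnePoint ℕ, sliceCLM K x g = g.curry x := fun x => rfl
    have hnN : ε / C' ≤ ‖g.curry (n : OnePoint ℕ) - g.curry OnePoint.infty‖ := by
      by_contra hlt
      push_neg at hlt
      have hb : |γ α (sliceCLM K (n : OnePoint ℕ) g - sliceCLM K OnePoint.infty g)|
          ≤ ‖γ α‖ * ‖sliceCLM K (n : OnePoint ℕ) g - sliceCLM K OnePoint.infty g‖ :=
        (γ α).le_opNorm _
      have hlt2 : ‖γ α‖ * ‖sliceCLM K (n : OnePoint ℕ) g - sliceCLM K OnePoint.infty g‖ < ε := by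
        have h1 : ‖γ α‖ ≤ C' := le_trans (hC α).2 (le_max_left _ _)
        have h2 : ‖sliceCLM K (n : OnePoint ℕ) g - sliceCLM K OnePoint.infty g‖ < ε / C' := by
          rw [hcurry, hcurry]; exact hlt
        calc ‖γ α‖ * ‖sliceCLM K (n : OnePoint ℕ) g - sliceCLM K OnePoint.infty g‖
            ≤ C' * ‖sliceCLM K (n : OnePoint ℕ) g - sliceCLM K OnePoint.infty g‖ :=
              mul_le_mul_of_nonneg_right h1 (norm_nonneg _)
          _ < C' * (ε / C') := by
              exact mul_lt_mul_of_pos_left h2 hC'pos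
          _ = ε := by field_simp
      exact absurd hmem (not_le.mpr (lt_of_le_of_lt hb hlt2))
    refine Set.mem_biUnion hnN ?_
    simp only [Set.mem_prod, Set.mem_singleton_iff, Set.mem_setOf_eq]
    exact ⟨trivial, by rw [hgInf]; exact hmem⟩
  · -- support
    intro n α
    refine closure_minimal ?_ (IsClosed.preimage continuous_fst isClosed_singleton)
    intro p hp
    simp only [Function.mem_support, ne_eq] at hp
    simp only [Set.mem_setOf_eq]
    by_contra h
    apply hp
    simp [chi_apply, h]
end

section
/- If a Banach space X admits a strictly increasing projectional resolution of the identity (P_α)_{ω≤α≤dens(X)}, then X admits a weak*-null biorthogonal system (x_α, γ_α)_{ω≤α<dens(X)} with ‖x_α‖ = 1 and ‖γ_α‖ ≤ 2 for all α. -/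
/-!
Take a unit vector `x_α ∈ range P_{α+1} ∩ ker P_α` (strict increase makes this intersection
nonzero) and `γ_α = φ_α ∘ (P_{α+1} - P_α)` with `φ_α` norming `x_α`; monotonicity of ranges
and kernels gives biorthogonality. Since `|γ_α v| ≤ ‖P_{α+1} v - P_α v‖`, weak*-nullness
reduces to: the jumps of `β ↦ P_β v` of size `≥ ε` below any `o` are finitely many. This goes
by transfinite induction on `o`; at a limit `o`, continuity at `o` puts all jumps above some
`N < o` below `ε`.
-/

open Cardinal Filter Topology

/-- The density character of a topological space: the least cardinality of a dense subset. -/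
noncomputable def densityCharacter (X : Type) [TopologicalSpace X] : Cardinal :=
  sInf {c : Cardinal | ∃ s : Set X, Dense s ∧ #s = c}

section Jumps

variable {M : Type*} [PseudoMetricSpace M] {f : Ordinal → M} {a d : Ordinal}

theorem finite_setOf_le_dist_succ_of_tendsto_at_limits
    (hlim : ∀ l, a < l → l ≤ d → Order.IsSuccLimit l →
      Tendsto (fun β : Set.Iio l => f β) atTop (𝓝 (f l)))
    {ε : ℝ} (hε : 0 < ε) :
    {α | a ≤ α ∧ α < d ∧ ε ≤ dist (f (α + 1)) (f α)}.Finite := by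
  suffices ∀ o ≤ d, {α | a ≤ α ∧ α < o ∧ ε ≤ dist (f (α + 1)) (f α)}.Finite from this d le_rfl
  intro o
  induction o using Ordinal.limitRecOn with
  | zero => simp
  | add_one o ih =>
    intro ho
    refine ((ih ((Order.le_succ o).trans ho)).insert o).subset ?_
    rintro α ⟨haα, hα, hjump⟩
    rcases (Order.lt_add_one_iff.mp hα).eq_or_lt with rfl | hα
    · exact Set.mem_insert _ _
    · exact Set.mem_insert_of_mem _ ⟨haα, hα, hjump⟩
  | limit o ho ih =>
    intro hod
    rcases le_or_gt o a with hoa | hao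
    · exact Set.finite_empty.subset fun α ⟨haα, hα, _⟩ => (hα.trans_le (hoa.trans haα)).false
    have : Nonempty (Set.Iio o) := ⟨⟨0, ho.bot_lt⟩⟩
    obtain ⟨N, hN⟩ := Metric.tendsto_atTop.mp (hlim o hao hod ho) (ε / 2) (half_pos hε)
    refine (ih N N.2 (N.2.le.trans hod)).subset ?_
    rintro α ⟨haα, hα, hjump⟩
    refine ⟨haα, lt_of_not_ge fun hNα => hjump.not_gt ?_, hjump⟩
    calc dist (f (α + 1)) (f α) ≤ dist (f (α + 1)) (f o) + dist (f α) (f o) :=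
          dist_triangle_right _ _ _
      _ < ε / 2 + ε / 2 :=
          add_lt_add (hN ⟨α + 1, ho.succ_lt hα⟩ (hNα.trans (Order.le_succ α))) (hN ⟨α, hα⟩ hNα)
      _ = ε := add_halves ε

end Jumps

section Projections

variable {𝕜 E : Type*} [RCLike 𝕜] [NormedAddCommGroup E] [NormedSpace 𝕜 E]

theorem apply_eq_self_of_mem_range {T : Type*} {p : T → T} (hp : ∀ x, p (p x) = p x) {x : T}
    (hx : x ∈ Set.range p) : p x = x := by
  obtain ⟨y, rfl⟩ := hx
  exact hp y

theorem exists_norm_eq_one_fixed_ker_of_range_ssubset {p q : E →L[𝕜] E}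
    (hp : ∀ x, p (p x) = p x) (hq : ∀ x, q (q x) = q x) (hpq : Set.range p ⊂ Set.range q) :
    ∃ x, ‖x‖ = 1 ∧ q x = x ∧ p x = 0 := by
  obtain ⟨y, hyq, hyp⟩ := Set.exists_of_ssubset hpq
  have hz0 : y - p y ≠ 0 := fun h => hyp ⟨y, (sub_eq_zero.mp h).symm⟩
  have hqz : q (y - p y) = y - p y := by
    rw [map_sub, apply_eq_self_of_mem_range hq hyq,
      apply_eq_self_of_mem_range hq (hpq.subset ⟨y, rfl⟩)]
  have hpz : p (y - p y) = 0 := by rw [map_sub, hp, sub_self]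
  refine ⟨(‖y - p y‖⁻¹ : 𝕜) • (y - p y), norm_smul_inv_norm hz0, ?_, ?_⟩
  · rw [map_smul, hqz]
  · rw [map_smul, hpz, smul_zero]

variable {P : Ordinal → E →L[𝕜] E} {a d : Ordinal}

theorem sub_apply_eq_zero_of_ne
    (hproj : ∀ α, a ≤ α → α ≤ d → ∀ x, P α (P α x) = P α x)
    (hrange : ∀ α β, a ≤ α → α ≤ β → β ≤ d → Set.range (P α) ⊆ Set.range (P β))
    (hker : ∀ α β, a ≤ α → α ≤ β → β ≤ d → ∀ x, P β x = 0 → P α x = 0)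
    {α β : Ordinal} (haα : a ≤ α) (hαd : α < d) (haβ : a ≤ β) (hβd : β < d) (hne : α ≠ β)
    {x : E} (hx : P (β + 1) x = x) (hx0 : P β x = 0) : P (α + 1) x - P α x = 0 := by
  rcases hne.lt_or_gt with hαβ | hβα
  · rw [hker (α + 1) β (haα.trans (Order.le_succ α)) (Order.add_one_le_of_lt hαβ) hβd.le x hx0,
      hker α β haα hαβ.le hβd.le x hx0, sub_zero]
  · have hxβ : x ∈ Set.range (P (β + 1)) := ⟨x, hx⟩
    have haβ1 : a ≤ β + 1 := haβ.trans (Order.le_succ β)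
    have hβα1 : β + 1 ≤ α := Order.add_one_le_of_lt hβα
    rw [apply_eq_self_of_mem_range (hproj α haα hαd.le)
        (hrange _ _ haβ1 hβα1 hαd.le hxβ),
      apply_eq_self_of_mem_range (hproj (α + 1) (haα.trans (Order.le_succ α))
        (Order.add_one_le_of_lt hαd))
        (hrange _ _ haβ1 (hβα1.trans (Order.le_succ α)) (Order.add_one_le_of_lt hαd) hxβ),
      sub_self]

end Projections

theorem statement13_general (X : Type) [NormedAddCommGroup X] [NormedSpace ℝ X]
    (P : Ordinal.{0} → (X →L[ℝ] X))
    (d : Ordinal.{0})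
    -- projections of norm one
    (hproj : ∀ α, Ordinal.omega0 ≤ α → α ≤ d → ∀ x : X, P α (P α x) = P α x)
    (hnorm : ∀ α, Ordinal.omega0 ≤ α → α ≤ d → ‖P α‖ = 1)
    -- monotonicity of ranges and kernels
    (hrange : ∀ α β, Ordinal.omega0 ≤ α → α ≤ β → β ≤ d →
      Set.range (P α) ⊆ Set.range (P β))
    (hker : ∀ α β, Ordinal.omega0 ≤ α → α ≤ β → β ≤ d →
      ∀ x : X, P β x = 0 → P α x = 0)
    -- continuity at limit ordinals
    (hlim : ∀ α, Ordinal.omega0 < α → α ≤ d → Order.IsSuccLimit α →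
      ∀ x : X, Tendsto (fun β : ↥(Set.Iio α) => P β.1 x) atTop (𝓝 (P α x)))
    -- strictly increasing
    (hstrict : ∀ α β, Ordinal.omega0 ≤ α → α < β → β ≤ d →
      Set.range (P α) ⊂ Set.range (P β)) :
    ∃ (x : {α : Ordinal.{0} // Ordinal.omega0 ≤ α ∧ α < d} → X)
      (γ : {α : Ordinal.{0} // Ordinal.omega0 ≤ α ∧ α < d} → (X →L[ℝ] ℝ)),
      (∀ α, ‖x α‖ = 1) ∧ (∀ α, ‖γ α‖ ≤ 2) ∧
      (∀ α β, γ α (x β) = if α = β then (1 : ℝ) else 0) ∧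
      (∀ v : X, ∀ ε : ℝ, 0 < ε →
        {α : {α : Ordinal.{0} // Ordinal.omega0 ≤ α ∧ α < d} | ε ≤ |γ α v|}.Finite) := by
  have hω_succ {α} (hα : Ordinal.omega0 ≤ α) : Ordinal.omega0 ≤ α + 1 := hα.trans (Order.le_succ α)
  choose x hx1 hxfix hxker using fun i : {α // Ordinal.omega0 ≤ α ∧ α < d} =>
    exists_norm_eq_one_fixed_ker_of_range_ssubset (hproj _ i.2.1 i.2.2.le)
      (hproj _ (hω_succ i.2.1) (Order.add_one_le_of_lt i.2.2))
      (hstrict _ _ i.2.1 (Order.lt_add_one_iff.mpr le_rfl) (Order.add_one_le_of_lt i.2.2))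
  choose φ hφ1 hφx using fun i => exists_dual_vector ℝ (x i) (by simp [hx1])
  refine ⟨x, fun i => (φ i).comp (P (i.1 + 1) - P i.1), hx1, fun i => ?_, fun i j => ?_,
    fun v ε hε => ?_⟩
  · calc ‖(φ i).comp (P (i.1 + 1) - P i.1)‖ ≤ ‖φ i‖ * (‖P (i.1 + 1)‖ + ‖P i.1‖) :=
          (ContinuousLinearMap.opNorm_comp_le _ _).trans (by gcongr; exact norm_sub_le _ _)
      _ = 2 := by
          rw [hφ1, hnorm _ (hω_succ i.2.1) (Order.add_one_le_of_lt i.2.2), hnorm _ i.2.1 i.2.2.le]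
          norm_num
  · split_ifs with hij
    · subst hij
      simp [hxfix, hxker, hφx, hx1]
    · rw [ContinuousLinearMap.comp_apply, sub_apply,
        sub_apply_eq_zero_of_ne hproj hrange hker i.2.1 i.2.2 j.2.1 j.2.2
          (fun h => hij (Subtype.ext h)) (hxfix j) (hxker j), map_zero]
  · refine ((finite_setOf_le_dist_succ_of_tendsto_at_limits (f := fun β => P β v)
      (fun l hl hld hlim_l => hlim l hl hld hlim_l v) hε).preimage
      Subtype.val_injective.injOn).subset fun i hi => ⟨i.2.1, i.2.2, hi.trans ?_⟩
    simpa [hφ1, dist_eq_norm] using (φ i).le_opNorm (P (i.1 + 1) v - P i.1 v)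

/-- if a Banach space `X` admits a strictly increasing projectional
resolution of the identity `(P_α)_{ω ≤ α ≤ dens X}`, then `X` admits a weak*-null
biorthogonal system `(x_α, γ_α)_{ω ≤ α < dens X}` with `‖x_α‖ = 1` and `‖γ_α‖ ≤ 2`. -/
theorem statement13 (X : Type) [NormedAddCommGroup X] [NormedSpace ℝ X] [CompleteSpace X]
    (P : Ordinal.{0} → (X →L[ℝ] X))
    (d : Ordinal.{0}) (hd : d = (densityCharacter X).ord)
    -- projections of norm one
    (hproj : ∀ α, Ordinal.omega0 ≤ α → α ≤ d → ∀ x : X, P α (P α x) = P α x)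
    (hnorm : ∀ α, Ordinal.omega0 ≤ α → α ≤ d → ‖P α‖ = 1)
    -- `P_{dens X}` is the identity
    (hid : ∀ x : X, P d x = x)
    -- monotonicity of ranges and kernels
    (hrange : ∀ α β, Ordinal.omega0 ≤ α → α ≤ β → β ≤ d →
      Set.range (P α) ⊆ Set.range (P β))
    (hker : ∀ α β, Ordinal.omega0 ≤ α → α ≤ β → β ≤ d →
      ∀ x : X, P β x = 0 → P α x = 0)
    -- continuity at limit ordinals
    (hlim : ∀ α, Ordinal.omega0 < α → α ≤ d → Order.IsSuccLimit α →
      ∀ x : X, Tendsto (fun β : ↥(Set.Iio α) => P β.1 x) atTop (𝓝 (P α x)))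
    -- density condition
    (hdens : ∀ α, Ordinal.omega0 ≤ α → α ≤ d →
      densityCharacter ↥(Set.range (P α)) ≤ α.card)
    -- strictly increasing
    (hstrict : ∀ α β, Ordinal.omega0 ≤ α → α < β → β ≤ d →
      Set.range (P α) ⊂ Set.range (P β)) :
    ∃ (x : {α : Ordinal.{0} // Ordinal.omega0 ≤ α ∧ α < d} → X)
      (γ : {α : Ordinal.{0} // Ordinal.omega0 ≤ α ∧ α < d} → (X →L[ℝ] ℝ)),
      (∀ α, ‖x α‖ = 1) ∧ (∀ α, ‖γ α‖ ≤ 2) ∧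
      (∀ α β, γ α (x β) = if α = β then (1 : ℝ) else 0) ∧
      (∀ v : X, ∀ ε : ℝ, 0 < ε →
        {α : {α : Ordinal.{0} // Ordinal.omega0 ≤ α ∧ α < d} | ε ≤ |γ α v|}.Finite) :=
  statement13_general X P d hproj hnorm hrange hker hlim hstrict
end

section
/- Let K be a compact Hausdorff space and F a closed, non-open G_δ subset of K. Then there exists a sequence (F_n)_{n∈ω} of nonempty, pairwise disjoint, regular closed subsets of K such that every cluster point of (F_n) lies in F and F_n ∩ F = ∅ for all n ∈ ω. -/
/-- if `F` is a closed non-open `G_δ` subset of a compact Hausdorff space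
`K`, then there is a sequence `(F_n)` of nonempty pairwise disjoint regular closed subsets
of `K`, disjoint from `F`, all of whose cluster points lie in `F`. -/
theorem statement14 (K : Type) [TopologicalSpace K] [CompactSpace K] [T2Space K]
    (F : Set K) (hFclosed : IsClosed F) (hFnotopen : ¬ IsOpen F)
    (hGdelta : ∃ V : ℕ → Set K, (∀ n, IsOpen (V n)) ∧ F = ⋂ n, V n) :
    ∃ Fs : ℕ → Set K,
      (∀ n, (Fs n).Nonempty) ∧
      (∀ n, IsClosed (Fs n)) ∧
      (∀ n, Fs n = closure (interior (Fs n))) ∧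
      (∀ n m, n ≠ m → Fs n ∩ Fs m = ∅) ∧
      (∀ n, Fs n ∩ F = ∅) ∧
      (∀ x : K, IsClusterPointOfSets Fs x → x ∈ F) := by
  classical
  obtain ⟨V, hVopen, hFV⟩ := hGdelta
  -- a point of F not in the interior of F
  obtain ⟨x, hxF, hxint⟩ : ∃ x ∈ F, x ∉ interior F := by
    by_contra h
    push_neg at h
    have : F = interior F := Set.Subset.antisymm h interior_subset
    exact hFnotopen (this ▸ isOpen_interior)
  -- shrink V n to U n with closure U n ⊆ V n
  have hU : ∀ n : ℕ, ∃ u : Set K, IsOpen u ∧ F ⊆ u ∧ closure u ⊆ V n := by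
    intro n
    exact normal_exists_closure_subset hFclosed (hVopen n) (hFV ▸ Set.iInter_subset V n)
  choose U hUopen hFU hUcl using hU
  set G : ℕ → Set K := fun n => ⋂ i ∈ Finset.range (n + 1), U i with hGdef
  have hGopen : ∀ n, IsOpen (G n) := fun n =>
    isOpen_biInter_finset (fun i _ => hUopen i)
  have hFG : ∀ n, F ⊆ G n := fun n =>
    Set.subset_iInter₂ (fun i _ => hFU i)
  have hGU : ∀ n, G n ⊆ U n := fun n =>
    Set.biInter_subset_of_mem (Finset.self_mem_range_succ n)
  have hGmono : ∀ {n m : ℕ}, n ≤ m → G m ⊆ G n := by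
    intro n m hnm
    apply Set.biInter_subset_biInter_left
    intro i hi
    exact Finset.mem_range.2 (lt_of_lt_of_le (Finset.mem_range.1 hi) (by omega))
  -- the key step: from any open set containing x, extract a regular closed set
  have key : ∀ O : Set K, ∃ R : Set K, IsOpen O → x ∈ O →
      (R.Nonempty ∧ IsClosed R ∧ R = closure (interior R) ∧ R ⊆ O ∧ R ∩ F = ∅) := by
    intro O
    by_cases h : IsOpen O ∧ x ∈ O
    · obtain ⟨hO, hxO⟩ := h
      have hnsub : ¬ O ⊆ F := fun hsub => hxint (interior_maximal hsub hO hxO)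
      obtain ⟨p, hpO, hpF⟩ := Set.not_subset.1 hnsub
      have hO' : IsOpen (O ∩ Fᶜ) := hO.inter hFclosed.isOpen_compl
      have hpO' : p ∈ O ∩ Fᶜ := ⟨hpO, hpF⟩
      obtain ⟨t, ht_nhds, htc, hts⟩ :=
        exists_mem_nhds_isClosed_subset (hO'.mem_nhds hpO')
      refine ⟨closure (interior t), fun _ _ => ?_⟩
      have hpint : p ∈ interior t := mem_interior_iff_mem_nhds.2 ht_nhds
      have hsubt : closure (interior t) ⊆ t :=
        closure_minimal interior_subset htc
      refine ⟨⟨p, subset_closure hpint⟩, isClosed_closure, ?_, ?_, ?_⟩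
      · apply Set.Subset.antisymm
        · exact closure_mono (interior_maximal subset_closure isOpen_interior)
        · exact closure_minimal interior_subset isClosed_closure
      · exact hsubt.trans (hts.trans Set.inter_subset_left)
      · rw [Set.eq_empty_iff_forall_notMem]
        rintro y ⟨hy1, hy2⟩
        exact (hts (hsubt hy1)).2 hy2
    · exact ⟨∅, fun hO hxO => absurd ⟨hO, hxO⟩ h⟩
  choose Rf hRf using key
  -- recursive construction of the union-so-far sets
  set A : ℕ → Set K := fun n => Nat.rec (∅ : Set K) (fun n A => A ∪ Rf (G n ∩ Aᶜ)) n
    with hAdef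
  have hA0 : A 0 = ∅ := rfl
  have hAsucc : ∀ n, A (n + 1) = A n ∪ Rf (G n ∩ (A n)ᶜ) := fun n => rfl
  set Fs : ℕ → Set K := fun n => Rf (G n ∩ (A n)ᶜ) with hFsdef
  -- invariant
  have inv : ∀ n, IsClosed (A n) ∧ A n ∩ F = ∅ := by
    intro n
    induction n with
    | zero => simp [hA0]
    | succ n ih =>
      have hxA : x ∉ A n := fun hxA =>
        Set.eq_empty_iff_forall_notMem.1 ih.2 x ⟨hxA, hxF⟩
      have hOn : IsOpen (G n ∩ (A n)ᶜ) := (hGopen n).inter ih.1.isOpen_compl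
      have hxOn : x ∈ G n ∩ (A n)ᶜ := ⟨hFG n hxF, hxA⟩
      obtain ⟨_, hcl, _, _, hdisj⟩ := hRf _ hOn hxOn
      constructor
      · rw [hAsucc]; exact ih.1.union hcl
      · rw [hAsucc, Set.union_inter_distrib_right, ih.2, hdisj, Set.union_empty]
  have hFsprop : ∀ n, (Fs n).Nonempty ∧ IsClosed (Fs n) ∧ Fs n = closure (interior (Fs n))
      ∧ Fs n ⊆ G n ∩ (A n)ᶜ ∧ Fs n ∩ F = ∅ := by
    intro n
    have hxA : x ∉ A n := fun hxA =>
      Set.eq_empty_iff_forall_notMem.1 (inv n).2 x ⟨hxA, hxF⟩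
    exact hRf _ ((hGopen n).inter (inv n).1.isOpen_compl) ⟨hFG n hxF, hxA⟩
  have hAmono : ∀ {n m : ℕ}, n ≤ m → A n ⊆ A m := by
    intro n m hnm
    induction m with
    | zero =>
      have : n = 0 := by omega
      subst this; rfl
    | succ m ih =>
      rcases Nat.lt_or_ge n (m + 1) with h | h
      · have := ih (by omega)
        rw [hAsucc]
        exact this.trans Set.subset_union_left
      · have : n = m + 1 := by omega
        subst this; rfl
  have hFsA : ∀ n, Fs n ⊆ A (n + 1) := by
    intro n
    rw [hAsucc]
    exact Set.subset_union_right
  refine ⟨Fs, fun n => (hFsprop n).1, fun n => (hFsprop n).2.1,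
    fun n => (hFsprop n).2.2.1, ?_, fun n => (hFsprop n).2.2.2.2, ?_⟩
  · -- pairwise disjoint
    have hdisj : ∀ n m, n < m → Fs n ∩ Fs m = ∅ := by
      intro n m hnm
      rw [Set.eq_empty_iff_forall_notMem]
      rintro y ⟨hy1, hy2⟩
      have hyA : y ∈ A m := hAmono (by omega : n + 1 ≤ m) (hFsA n hy1)
      exact ((hFsprop m).2.2.2.1 hy2).2 hyA
    intro n m hnm
    rcases Nat.lt_or_ge n m with h | h
    · exact hdisj n m h
    · rw [Set.inter_comm]
      exact hdisj m n (by omega)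
  · -- cluster points are in F
    intro y hy
    by_contra hyF
    have : y ∉ ⋂ n, V n := hFV ▸ hyF
    obtain ⟨m, hm⟩ : ∃ m, y ∉ V m := by
      by_contra h; push_neg at h; exact this (Set.mem_iInter.2 h)
    have hycl : y ∉ closure (G m) :=
      fun h => hm (hUcl m (closure_mono (hGU m) h))
    have hUnhds : (closure (G m))ᶜ ∈ nhds y :=
      isClosed_closure.isOpen_compl.mem_nhds hycl
    have hinf := hy _ hUnhds
    have hsub : {n : ℕ | (Fs n ∩ (closure (G m))ᶜ).Nonempty} ⊆ Set.Iio m := by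
      intro n hn
      by_contra hnm
      simp only [Set.mem_Iio, not_lt] at hnm
      obtain ⟨z, hz1, hz2⟩ := hn
      have : z ∈ G m := hGmono hnm ((hFsprop n).2.2.2.1 hz1).1
      exact hz2 (subset_closure this)
    exact hinf ((Set.finite_Iio m).subset hsub)
end

section
/- Let K be a ccc Valdivia compact space and H = {x ∈ K : w(x,K) ≥ 𝔠}. Then: (a) if w(K) ≥ 𝔠 then H ≠ ∅; (b) w(K \ Int(H)) < 𝔠; (c) H is a regular closed subset of K; (d) w(x, H) ≥ 𝔠 for all x ∈ H. -/
open Cardinal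

/-- The weight of a topological space: the least cardinality of a topological basis. -/
noncomputable def tweight (X : Type) [TopologicalSpace X] : Cardinal :=
  sInf {c : Cardinal | ∃ B : Set (Set X), TopologicalSpace.IsTopologicalBasis B ∧ #B = c}

/-- A compact Hausdorff space is Valdivia if some continuous injection into a product
`ℝ^I` pulls the `Σ`-product (points of countable support) back to a dense set. -/
def IsValdivia (K : Type) [TopologicalSpace K] [CompactSpace K] [T2Space K] : Prop :=
  ∃ (I : Type) (φ : K → I → ℝ), Continuous φ ∧ Function.Injective φ ∧
    Dense {x : K | {i : I | φ x i ≠ 0}.Countable}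

open TopologicalSpace Topology Set

lemma tweight_le_basis {X : Type} [TopologicalSpace X] {B : Set (Set X)}
    (hB : IsTopologicalBasis B) : tweight X ≤ #B :=
  csInf_le' ⟨B, hB, rfl⟩

lemma exists_tweight_basis (X : Type) [TopologicalSpace X] :
    ∃ B : Set (Set X), IsTopologicalBasis B ∧ #B = tweight X := by
  have h : {c : Cardinal | ∃ B : Set (Set X), IsTopologicalBasis B ∧ #B = c}.Nonempty :=
    ⟨_, _, isTopologicalBasis_opens, rfl⟩
  exact csInf_mem h

lemma tweight_le_of_inducing {X Y : Type} [TopologicalSpace X] [TopologicalSpace Y]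
    {f : X → Y} (hf : IsInducing f) : tweight X ≤ tweight Y := by
  obtain ⟨B, hB, hcard⟩ := exists_tweight_basis Y
  calc tweight X ≤ #((Set.preimage f) '' B) := tweight_le_basis (hB.isInducing hf)
    _ ≤ #B := Cardinal.mk_image_le
    _ = tweight Y := hcard

lemma tweight_mono {K : Type} [TopologicalSpace K] {A B : Set K} (h : A ⊆ B) :
    tweight ↥A ≤ tweight ↥B := by
  have hind : IsInducing (Set.inclusion h) := by
    refine IsInducing.of_comp (continuous_inclusion h) continuous_subtype_val ?_
    have : (Subtype.val ∘ Set.inclusion h) = (Subtype.val : ↥A → K) := rfl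
    rw [this]; exact IsInducing.subtypeVal
  exact tweight_le_of_inducing hind

lemma aleph0_lt_cof_continuum : ℵ₀ < (Cardinal.continuum.ord).cof := by
  by_contra h
  push_neg at h
  have h1 := Cardinal.lt_power_cof (c := Cardinal.continuum) aleph0_le_continuum
  have h2 : Cardinal.continuum ^ (Cardinal.continuum.ord).cof ≤ Cardinal.continuum ^ ℵ₀ :=
    Cardinal.power_le_power_left continuum_ne_zero h
  rw [continuum_power_aleph0] at h2
  exact absurd (h1.trans_le h2) (lt_irrefl _)

lemma tweight_pi_lt_continuum {J : Type} (hJ : #J < Cardinal.continuum) :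
    tweight (J → ℝ) < Cardinal.continuum := by
  -- countable basis of each finite subproduct
  have hcb : ∀ F : Finset J, ∃ b : Set (Set (↥F → ℝ)),
      b.Countable ∧ IsTopologicalBasis b := by
    intro F
    obtain ⟨b, hbc, -, hb⟩ := exists_countable_basis (↥F → ℝ)
    exact ⟨b, hbc, hb⟩
  choose cb hcbc hcbb using hcb
  -- restriction maps
  set r : ∀ F : Finset J, (J → ℝ) → (↥F → ℝ) := fun F f i => f i.1 with hr
  have hrc : ∀ F, Continuous (r F) := fun F => continuous_pi fun i => continuous_apply i.1
  set B : Set (Set (J → ℝ)) := ⋃ F : Finset J, (Set.preimage (r F)) '' (cb F) with hB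
  have hBbasis : IsTopologicalBasis B := by
    refine isTopologicalBasis_of_isOpen_of_nhds ?_ ?_
    · rintro u hu
      simp only [hB, Set.mem_iUnion, Set.mem_image] at hu
      obtain ⟨F, b, hb, rfl⟩ := hu
      exact ((hcbb F).isOpen hb).preimage (hrc F)
    · intro a u hau hu
      obtain ⟨F, t, ht, hsub⟩ := isOpen_pi_iff.mp hu a hau
      have hO : IsOpen (Set.univ.pi fun i : ↥F => t i.1) :=
        isOpen_set_pi Set.finite_univ fun i _ => (ht i.1 i.2).1
      have haO : r F a ∈ Set.univ.pi fun i : ↥F => t i.1 := fun i _ => (ht i.1 i.2).2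
      obtain ⟨b, hb, hab, hbsub⟩ := (hcbb F).exists_subset_of_mem_open haO hO
      refine ⟨(r F) ⁻¹' b, ?_, hab, ?_⟩
      · simp only [hB, Set.mem_iUnion, Set.mem_image]
        exact ⟨F, b, hb, rfl⟩
      · refine subset_trans ?_ hsub
        intro f hf
        have : r F f ∈ Set.univ.pi fun i : ↥F => t i.1 := hbsub hf
        intro i hi
        exact this ⟨i, hi⟩ (Set.mem_univ _)
  have hcard : #B ≤ #(Finset J) * ℵ₀ := by
    refine (Cardinal.mk_iUnion_le _).trans ?_
    refine mul_le_mul_right ?_ _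
    exact ciSup_le' fun F => Cardinal.mk_image_le.trans (hcbc F).le_aleph0
  have hfin : #(Finset J) < Cardinal.continuum := by
    cases finite_or_infinite J with
    | inl h =>
      haveI := h
      haveI := Fintype.ofFinite J
      exact (Cardinal.lt_aleph0_of_finite (Finset J)).trans aleph0_lt_continuum
    | inr h => rwa [Cardinal.mk_finset_of_infinite]
  calc tweight (J → ℝ) ≤ #B := tweight_le_basis hBbasis
    _ ≤ #(Finset J) * ℵ₀ := hcard
    _ < Cardinal.continuum := Cardinal.mul_lt_of_lt aleph0_le_continuum hfin aleph0_lt_continuum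

/-- for a ccc Valdivia compact space `K` and
`H = {x ∈ K : w(x,K) ≥ 𝔠}`: (a) if `w(K) ≥ 𝔠` then `H ≠ ∅`; (b) `w(K \ Int H) < 𝔠`;
(c) `H` is a regular closed set; (d) `w(x,H) ≥ 𝔠` for every `x ∈ H`. -/
theorem statement17 (K : Type) [TopologicalSpace K] [CompactSpace K] [T2Space K]
    (hccc : ∀ 𝒰 : Set (Set K), (∀ W ∈ 𝒰, IsOpen W ∧ W.Nonempty) →
      𝒰.Pairwise (Disjoint · ·) → 𝒰.Countable)
    (hValdivia : IsValdivia K)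
    (H : Set K) (hH : H = {x : K | ∀ V ∈ nhds x, Cardinal.continuum ≤ tweight ↥V}) :
    -- (a)
    (Cardinal.continuum ≤ tweight K → H.Nonempty) ∧
    -- (b)
    tweight ↥((Set.univ : Set K) \ interior H) < Cardinal.continuum ∧
    -- (c)
    (IsClosed H ∧ H = closure (interior H)) ∧
    -- (d)
    (∀ x : K, ∀ hx : x ∈ H, ∀ V ∈ nhds (⟨x, hx⟩ : ↥H),
      Cardinal.continuum ≤ tweight ↥V) := by
  obtain ⟨I, φ, hφc, hφi, hφd⟩ := hValdivia
  subst hH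
  set D : Set K := {x : K | {i : I | φ x i ≠ 0}.Countable} with hDdef
  set H : Set K := {x : K | ∀ V ∈ nhds x, Cardinal.continuum ≤ tweight ↥V} with hHdef
  set U : Set K := {x : K | ∃ V ∈ nhds x, tweight ↥V < Cardinal.continuum} with hUdef
  have hmemU : ∀ x : K, x ∈ U ↔ ∃ V ∈ nhds x, tweight ↥V < Cardinal.continuum := by
    intro x
    rw [hUdef]
    exact Iff.rfl
  have hmemH : ∀ x : K, x ∈ H ↔ ∀ V ∈ nhds x, Cardinal.continuum ≤ tweight ↥V := by
    intro x
    rw [hHdef]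
    exact Iff.rfl
  have hHU : H = Uᶜ := by
    ext x
    rw [Set.mem_compl_iff, hmemH]
    constructor
    · intro hx hxU
      obtain ⟨V, hV, hVlt⟩ := (hmemU x).mp hxU
      exact absurd (hx V hV) (not_le.mpr hVlt)
    · intro hx V hV
      by_contra hlt
      exact hx ((hmemU x).mpr ⟨V, hV, not_le.mp hlt⟩)
  have hUopen : IsOpen U := by
    rw [isOpen_iff_mem_nhds]
    intro x hx
    obtain ⟨V, hV, hVlt⟩ := (hmemU x).mp hx
    filter_upwards [interior_mem_nhds.mpr hV] with y hy
    exact (hmemU y).mpr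
      ⟨V, mem_nhds_iff.mpr ⟨interior V, interior_subset, isOpen_interior, hy⟩, hVlt⟩
  -- MAIN LEMMA : the closure of U has weight < continuum
  have hsmall : tweight ↥(closure U) < Cardinal.continuum := by
    set Pc : Set (Set K) :=
      {G | IsOpen G ∧ G.Nonempty ∧ tweight ↥G < Cardinal.continuum} with hPc
    set Fam : Set (Set (Set K)) := {𝒜 | 𝒜 ⊆ Pc ∧ 𝒜.Pairwise (Disjoint · ·)} with hFam
    obtain ⟨𝒜, h𝒜⟩ : ∃ 𝒜, Maximal (· ∈ Fam) 𝒜 := by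
      apply zorn_subset
      intro c hc hchain
      refine ⟨⋃₀ c, ⟨?_, ?_⟩, fun s hs => Set.subset_sUnion_of_mem hs⟩
      · intro G hG
        obtain ⟨A, hA, hGA⟩ := hG
        exact (hc hA).1 hGA
      · intro a ha b hb hab
        obtain ⟨A, hA, haA⟩ := ha
        obtain ⟨B, hB, hbB⟩ := hb
        rcases hchain.total hA hB with h | h
        · exact (hc hB).2 (h haA) hbB hab
        · exact (hc hA).2 haA (h hbB) hab
    have h𝒜P : 𝒜 ⊆ Pc := h𝒜.prop.1
    have h𝒜count : 𝒜.Countable :=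
      hccc 𝒜 (fun W hW => ⟨(h𝒜P hW).1, (h𝒜P hW).2.1⟩) h𝒜.prop.2
    -- density of the union of the maximal family in U
    have hU𝒜 : U ⊆ closure (⋃₀ 𝒜) := by
      intro x hx
      rw [mem_closure_iff]
      intro o ho hxo
      by_contra hno
      rw [Set.not_nonempty_iff_eq_empty] at hno
      obtain ⟨V, hV, hVlt⟩ := (hmemU x).mp hx
      set G' : Set K := o ∩ interior V with hG'
      have hG'o : IsOpen G' := ho.inter isOpen_interior
      have hxG' : x ∈ G' := ⟨hxo, mem_interior_iff_mem_nhds.mpr hV⟩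
      have hG'w : tweight ↥G' < Cardinal.continuum :=
        lt_of_le_of_lt
          (tweight_mono (subset_trans Set.inter_subset_right interior_subset)) hVlt
      have hG'P : G' ∈ Pc := ⟨hG'o, ⟨x, hxG'⟩, hG'w⟩
      have hdisj : ∀ A ∈ 𝒜, Disjoint G' A := by
        intro A hA
        refine Set.disjoint_left.mpr fun z hzG' hzA => ?_
        have hz : z ∈ o ∩ ⋃₀ 𝒜 := ⟨hzG'.1, A, hA, hzA⟩
        rw [hno] at hz
        exact hz
      have hins : insert G' 𝒜 ∈ Fam := by
        constructor
        · exact Set.insert_subset hG'P h𝒜P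
        · exact h𝒜.prop.2.insert fun A hA _ => ⟨hdisj A hA, (hdisj A hA).symm⟩
      have hG'mem : G' ∈ 𝒜 := h𝒜.2 hins (Set.subset_insert _ _) (Set.mem_insert _ _)
      have hz : x ∈ o ∩ ⋃₀ 𝒜 := ⟨hxo, G', hG'mem, hxG'⟩
      rw [hno] at hz
      exact hz
    -- small dense subsets, taken inside D, of each member of the family
    have hDdense : Dense D := hφd
    have key : ∀ G ∈ 𝒜, ∃ T : Set K,
        T ⊆ D ∧ T ⊆ G ∧ #T < Cardinal.continuum ∧ G ⊆ closure T := by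
      intro G hG
      obtain ⟨hGo, hGne, hGw⟩ := h𝒜P hG
      have hKne : Nonempty K := ⟨hGne.some⟩
      obtain ⟨B, hB, hBcard⟩ := exists_tweight_basis ↥G
      have hpick : ∀ b : Set ↥G, b ∈ B → b.Nonempty →
          ∃ d : K, d ∈ D ∧ d ∈ Subtype.val '' b := by
        intro b hb hbne
        have hopen : IsOpen (Subtype.val '' b) := hGo.isOpenMap_subtype_val b (hB.isOpen hb)
        obtain ⟨d, hd1, hd2⟩ := hDdense.inter_open_nonempty _ hopen (hbne.image _)
        exact ⟨d, hd2, hd1⟩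
      choose! pick hpickD hpickMem using hpick
      refine ⟨pick '' {b ∈ B | b.Nonempty}, ?_, ?_, ?_, ?_⟩
      · rintro d ⟨b, ⟨hbB, hbne⟩, rfl⟩
        exact hpickD b hbB hbne
      · rintro d ⟨b, ⟨hbB, hbne⟩, rfl⟩
        obtain ⟨z, hz, hze⟩ := hpickMem b hbB hbne
        rw [← hze]
        exact z.2
      · calc #(pick '' {b ∈ B | b.Nonempty})
            ≤ #({b ∈ B | b.Nonempty} : Set (Set ↥G)) := Cardinal.mk_image_le
          _ ≤ #B := Cardinal.mk_le_mk_of_subset (Set.sep_subset _ _)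
          _ = tweight ↥G := hBcard
          _ < Cardinal.continuum := hGw
      · intro x hx
        rw [mem_closure_iff]
        intro o ho hxo
        have hxin : (⟨x, hx⟩ : ↥G) ∈ Subtype.val ⁻¹' o := hxo
        obtain ⟨b, hbB, hxb, hbsub⟩ :=
          hB.exists_subset_of_mem_open hxin (ho.preimage continuous_subtype_val)
        have hbne : b.Nonempty := ⟨⟨x, hx⟩, hxb⟩
        obtain ⟨z, hz, hze⟩ := hpickMem b hbB hbne
        exact ⟨pick b, by rw [← hze]; exact hbsub hz, ⟨b, ⟨hbB, hbne⟩, rfl⟩⟩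
    choose! T hTD hTG hTcard hTcl using key
    set S : Set K := ⋃ G ∈ 𝒜, T G with hSdef
    have hScard : #S < Cardinal.continuum := by
      rw [hSdef, Set.biUnion_eq_iUnion]
      refine lt_of_le_of_lt (Cardinal.mk_iUnion_le _) ?_
      haveI := h𝒜count.to_subtype
      have hι : #↥𝒜 ≤ ℵ₀ := Cardinal.mk_le_aleph0
      have hsup : ⨆ G : ↥𝒜, #(T G.1) < Cardinal.continuum :=
        Ordinal.iSup_lt (lt_of_le_of_lt hι aleph0_lt_cof_continuum)
          (fun G => hTcard G.1 G.2)
      exact Cardinal.mul_lt_of_lt aleph0_le_continuum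
        (hι.trans_lt aleph0_lt_continuum) hsup
    have hSD : S ⊆ D := by
      intro s hs
      simp only [hSdef, Set.mem_iUnion] at hs
      obtain ⟨G, hG, hsT⟩ := hs
      exact hTD G hG hsT
    have h1 : ⋃₀ 𝒜 ⊆ closure S := by
      rintro x ⟨G, hG, hxG⟩
      refine closure_mono ?_ (hTcl G hG hxG)
      intro y hy
      exact Set.mem_biUnion hG hy
    have hUS : U ⊆ closure S := fun x hx =>
      closure_minimal h1 isClosed_closure (hU𝒜 hx)
    -- supports
    set Js : Set I := ⋃ s ∈ S, {i : I | φ s i ≠ 0} with hJdef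
    have hJcard : #Js < Cardinal.continuum := by
      rw [hJdef, Set.biUnion_eq_iUnion]
      refine lt_of_le_of_lt (Cardinal.mk_iUnion_le _) ?_
      refine Cardinal.mul_lt_of_lt aleph0_le_continuum hScard ?_
      refine lt_of_le_of_lt ?_ aleph0_lt_continuum
      rcases isEmpty_or_nonempty ↥S with h | h
      · rw [ciSup_of_empty]
        exact bot_le
      · refine ciSup_le' fun s => ?_
        have hsD : s.1 ∈ D := hSD s.2
        rw [hDdef] at hsD
        haveI : Countable ↥{i : I | φ s.1 i ≠ 0} := hsD.to_subtype
        exact Cardinal.mk_le_aleph0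
    have hsupp : ∀ x ∈ closure U, ∀ i : I, i ∉ Js → φ x i = 0 := by
      intro x hx i hi
      have hSsub : S ⊆ {z : K | φ z i = 0} := by
        intro s hs
        by_contra hne
        exact hi (Set.mem_biUnion hs hne)
      have hcl : IsClosed {z : K | φ z i = 0} :=
        isClosed_eq ((continuous_apply i).comp hφc) continuous_const
      exact (closure_minimal hSsub hcl)
        ((closure_minimal hUS isClosed_closure) hx)
    -- embedding of the closure of U into ℝ^Js
    haveI : CompactSpace ↥(closure U) :=
      isCompact_iff_compactSpace.mp isClosed_closure.isCompact
    set ψ : ↥(closure U) → (↥Js → ℝ) := fun x j => φ x.1 j.1 with hψdef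
    have hψc : Continuous ψ :=
      continuous_pi fun j => ((continuous_apply j.1).comp hφc).comp continuous_subtype_val
    have hψi : Function.Injective ψ := by
      intro x y hxy
      apply Subtype.ext
      apply hφi
      funext i
      by_cases hi : i ∈ Js
      · exact congrFun hxy ⟨i, hi⟩
      · rw [hsupp x.1 x.2 i hi, hsupp y.1 y.2 i hi]
    have hemb : IsInducing ψ := (hψc.isClosedEmbedding hψi).isInducing
    calc tweight ↥(closure U) ≤ tweight (↥Js → ℝ) := tweight_le_of_inducing hemb
      _ < Cardinal.continuum := tweight_pi_lt_continuum hJcard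
  -- deduce the four statements
  have hHclosed : IsClosed H := by
    rw [hHU]
    exact hUopen.isClosed_compl
  have hbset : (Set.univ : Set K) \ interior H = closure U := by
    rw [hHU, ← Set.compl_eq_univ_diff, interior_compl, compl_compl]
  have hb : tweight ↥((Set.univ : Set K) \ interior H) < Cardinal.continuum := by
    rw [hbset]
    exact hsmall
  have hc2 : H = closure (interior H) := by
    apply Set.Subset.antisymm
    · intro x hx
      by_contra hxc
      set O : Set K := (closure (interior H))ᶜ with hO
      have hOopen : IsOpen O := isClosed_closure.isOpen_compl
      have hxO : x ∈ O := hxc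
      have hOsub : O ⊆ closure U := by
        intro y hy
        rw [mem_closure_iff]
        intro o ho hyo
        by_contra hno
        rw [Set.not_nonempty_iff_eq_empty] at hno
        have hsub : o ∩ O ⊆ interior H := by
          refine interior_maximal ?_ (ho.inter hOopen)
          intro z hz
          rw [hHU]
          intro hzU
          have hz2 : z ∈ o ∩ U := ⟨hz.1, hzU⟩
          rw [hno] at hz2
          exact hz2
        have hyint : y ∈ interior H := hsub ⟨hyo, hy⟩
        exact hy (subset_closure hyint)
      have hclnhds : closure U ∈ nhds x := mem_nhds_iff.mpr ⟨O, hOsub, hOopen, hxO⟩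
      exact absurd ((hmemH x).mp hx (closure U) hclnhds) (not_le.mpr hsmall)
    · exact closure_minimal interior_subset hHclosed
  refine ⟨?_, hb, ⟨hHclosed, hc2⟩, ?_⟩
  · -- (a)
    intro hw
    by_contra hne
    rw [Set.not_nonempty_iff_eq_empty] at hne
    have hUuniv : U = Set.univ := by
      have h := hHU
      rw [hne] at h
      rw [← compl_compl U, ← h, Set.compl_empty]
    have hle : tweight K ≤ tweight ↥(closure U) := by
      rw [hUuniv, closure_univ]
      exact tweight_le_of_inducing (Homeomorph.Set.univ K).symm.isInducing
    exact absurd (hw.trans hle) (not_le.mpr hsmall)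
  · -- (d)
    intro x hx V hV
    rw [mem_nhds_subtype] at hV
    obtain ⟨W', hW', hWV⟩ := hV
    obtain ⟨W, hWsub, hWo, hxW⟩ := mem_nhds_iff.mp hW'
    have hxcl : x ∈ closure (interior H) := hc2 ▸ hx
    obtain ⟨y, hyW, hyint⟩ := mem_closure_iff.mp hxcl W hWo hxW
    set G : Set K := W ∩ interior H with hGdef
    have hGo : IsOpen G := hWo.inter isOpen_interior
    have hyG : y ∈ G := ⟨hyW, hyint⟩
    have hyH : y ∈ H := interior_subset hyint
    have hyw : Cardinal.continuum ≤ tweight ↥G := (hmemH y).mp hyH G (hGo.mem_nhds hyG)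
    have hGH : G ⊆ H := fun z hz => interior_subset hz.2
    set g : ↥G → ↥V := fun z => ⟨⟨z.1, hGH z.2⟩, hWV (hWsub z.2.1)⟩ with hg
    have hgc : Continuous g :=
      Continuous.subtype_mk (Continuous.subtype_mk continuous_subtype_val _) _
    have hgind : IsInducing g := by
      refine IsInducing.of_comp hgc (continuous_subtype_val.comp continuous_subtype_val) ?_
      have heq : (((Subtype.val : ↥H → K) ∘ (Subtype.val : ↥V → ↥H)) ∘ g) =
          (Subtype.val : ↥G → K) := rfl
      rw [heq]
      exact IsInducing.subtypeVal
    exact hyw.trans (tweight_le_of_inducing hgind)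
end

section
/- Let T = ⋃_{α a countable successor ordinal} ω₁^α be the tree of transfinite sequences in ω₁ of countable successor length, ordered by extension, and let P(T) ⊆ 2^T be its path space. Then P(T) is a closed (hence compact) subspace of 2^T, and P(T) ∩ Σ(T) is dense in P(T), where Σ(T) = {x ∈ ℝ^T : supp x countable}; hence P(T) is a Valdivia compact space. -/
open Cardinal

/-- The first uncountable ordinal. -/
noncomputable def omega1 : Ordinal.{0} := (Cardinal.aleph 1).ord

/-- The tree `T = ⋃ {ω₁^α : α a countable successor ordinal}` of transfinite sequences in
`ω₁` of countable successor length, encoded as pairs (length, function), with the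
function normalized to `0` outside the domain. -/
def TreeT : Type 1 :=
  {p : Ordinal.{0} × (Ordinal.{0} → Ordinal.{0}) //
    (∃ β : Ordinal.{0}, p.1 = β + 1) ∧ p.1 < omega1 ∧
    (∀ i, i < p.1 → p.2 i < omega1) ∧ (∀ i, ¬ i < p.1 → p.2 i = 0)}

/-- The tree order on `T`: extension of sequences. -/
def treeLE (s t : TreeT) : Prop := s.1.1 ≤ t.1.1 ∧ ∀ i, i < s.1.1 → s.1.2 i = t.1.2 i

/-- Strict tree order. -/
def treeLT (s t : TreeT) : Prop := treeLE s t ∧ s ≠ t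

/-- The path space `P(T) ⊆ 2^T`: characteristic functions of downward closed chains. -/
def PathSpace : Set (TreeT → Bool) :=
  {ε | (∀ s t, ε s = true → ε t = true → treeLE s t ∨ treeLE t s) ∧
    (∀ t s, ε t = true → treeLT s t → ε s = true)}

/-!
Being a path is a conjunction of conditions each involving only two coordinates, so `P(T)` is
closed. Cutting a path `A` at a countable height `δ` leaves a path with countable support, since a
chain meets each level of the tree at most once; as `δ → ω₁` these cuts converge to `A` pointwise.
-/

open Filter Topology

lemma isSuccLimit_omega1 : Order.IsSuccLimit omega1 :=
  Cardinal.isSuccLimit_ord (Cardinal.aleph0_le_aleph 1)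

lemma countable_Iio_of_lt_omega1 {δ : Ordinal.{0}} (hδ : δ < omega1) : (Set.Iio δ).Countable := by
  rw [← le_aleph0_iff_set_countable, mk_Iio_ordinal, lift_le_aleph0, ← lt_aleph_one_iff]
  exact lt_ord.mp hδ

lemma isClosed_setOf_apply_apply {ι β : Type*} [TopologicalSpace β] [DiscreteTopology β]
    (i j : ι) (P : β → β → Prop) : IsClosed {f : ι → β | P (f i) (f j)} :=
  (isClosed_discrete {p : β × β | P p.1 p.2}).preimage (f := fun f : ι → β => (f i, f j))
    (by fun_prop)

lemma eq_of_treeLE_of_length_le {s t : TreeT} (hst : treeLE s t) (hts : t.1.1 ≤ s.1.1) :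
    s = t := by
  have hlen : s.1.1 = t.1.1 := le_antisymm hst.1 hts
  refine Subtype.ext (Prod.ext hlen (funext fun i => ?_))
  by_cases hi : i < s.1.1
  · exact hst.2 i hi
  · rw [s.2.2.2.2 i hi, t.2.2.2.2 i (hlen ▸ hi)]

lemma isClosed_pathSpace : IsClosed PathSpace := by
  simp only [PathSpace, Set.ofPred_and, Set.ofPred_forall]
  exact .inter
    (isClosed_iInter fun s => isClosed_iInter fun t =>
      isClosed_setOf_apply_apply s t fun a b => a = true → b = true → treeLE s t ∨ treeLE t s)
    (isClosed_iInter fun t => isClosed_iInter fun s =>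
      isClosed_setOf_apply_apply t s fun a b => a = true → treeLT s t → b = true)

lemma injOn_length_of_mem_pathSpace {ε : TreeT → Bool} (hε : ε ∈ PathSpace) :
    Set.InjOn (fun t : TreeT => t.1.1) {t | ε t = true} := by
  intro s hs t ht hlen
  rcases hε.1 s t hs ht with hst | hts
  · exact eq_of_treeLE_of_length_le hst hlen.ge
  · exact (eq_of_treeLE_of_length_le hts hlen.le).symm

noncomputable def truncate (ε : TreeT → Bool) (δ : Ordinal.{0}) : TreeT → Bool :=
  fun t => ε t && decide (t.1.1 < δ)

lemma truncate_eq_true {ε : TreeT → Bool} {δ : Ordinal.{0}} {t : TreeT} :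
    truncate ε δ t = true ↔ ε t = true ∧ t.1.1 < δ := by
  simp [truncate]

lemma truncate_mem_pathSpace {ε : TreeT → Bool} (hε : ε ∈ PathSpace) (δ : Ordinal.{0}) :
    truncate ε δ ∈ PathSpace := by
  refine ⟨fun s t hs ht => ?_, fun t s ht hst => ?_⟩
  · exact hε.1 s t (truncate_eq_true.1 hs).1 (truncate_eq_true.1 ht).1
  · obtain ⟨hεt, htδ⟩ := truncate_eq_true.1 ht
    exact truncate_eq_true.2 ⟨hε.2 t s hεt hst, hst.1.1.trans_lt htδ⟩

lemma countable_support_truncate {ε : TreeT → Bool} (hε : ε ∈ PathSpace) {δ : Ordinal.{0}}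
    (hδ : δ < omega1) : {t | truncate ε δ t ≠ false}.Countable := by
  simp only [ne_eq, Bool.not_eq_false, truncate_eq_true]
  exact Set.MapsTo.countable_of_injOn (f := fun t : TreeT => t.1.1) (fun t ht => ht.2)
    ((injOn_length_of_mem_pathSpace hε).mono fun t ht => ht.1) (countable_Iio_of_lt_omega1 hδ)

lemma tendsto_truncate (ε : TreeT → Bool) :
    Tendsto (fun δ : Set.Iio omega1 => truncate ε δ) atTop (𝓝 ε) := by
  refine tendsto_pi_nhds.2 fun t => tendsto_const_nhds.congr' ?_
  filter_upwards [eventually_ge_atTop ⟨Order.succ t.1.1, isSuccLimit_omega1.succ_lt t.2.2.1⟩]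
    with δ hδ
  simp [truncate, Order.succ_le_iff.mp (Subtype.coe_le_coe.mpr hδ)]

/-- `P(T)` is closed (hence compact) in the Cantor cube `2^T`, and the
points of `P(T)` of countable support (i.e. `P(T) ∩ Σ(T)`) are dense in `P(T)`; hence
`P(T)` is a Valdivia compact space. -/
theorem statement18 :
    IsClosed PathSpace ∧
    Dense {ε : ↥PathSpace | {t : TreeT | (ε : TreeT → Bool) t ≠ false}.Countable} := by
  refine ⟨isClosed_pathSpace, fun ε => ?_⟩
  have : Nonempty (Set.Iio omega1) := ⟨⟨0, isSuccLimit_omega1.bot_lt⟩⟩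
  exact mem_closure_of_tendsto
    (f := fun δ : Set.Iio omega1 => ⟨truncate ε δ, truncate_mem_pathSpace ε.2 δ⟩)
    (tendsto_subtype_rng.2 (tendsto_truncate ε))
    (Eventually.of_forall fun δ => countable_support_truncate ε.2 δ.2)
end
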